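/- arXiv:1901.03044 — 5 statements merged into one kernel-verified Lean document; each statement's English description precedes it below -/
import Mathlib

section
/- Let $U \subseteq \mathbb{C}$ be an open set, $\rho : U \to \mathbb{C}$ a holomorphic function with $|\rho(z)| < 1$ and $\rho'(z) \neq 0$ for all $z \in U$. Then the function $r(z,\bar z) := \frac{2|\rho'(z)|}{1-|\rho(z)|^2}$ satisfies the PDE $r \, r_{z\bar z} - |r_z|^2 - \tfrac{1}{4} r^4 = 0$ on $U$ (where subscripts denote Wirtinger derivatives). -/
open Complex

/-- Wirtinger derivative `∂/∂z` of a function `f : ℂ → ℂ` (viewed as a smooth map `ℝ² → ℂ`). -/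
noncomputable def wd (f : ℂ → ℂ) (z : ℂ) : ℂ :=
  (1 / 2 : ℂ) * (fderiv ℝ f z 1 - Complex.I * fderiv ℝ f z Complex.I)

/-- Wirtinger derivative `∂/∂z̄` of a function `f : ℂ → ℂ`. -/
noncomputable def wdb (f : ℂ → ℂ) (z : ℂ) : ℂ :=
  (1 / 2 : ℂ) * (fderiv ℝ f z 1 + Complex.I * fderiv ℝ f z Complex.I)

/-!
Near each point, `ρ'` has a holomorphic square root `g`, so `r = 2 g ḡ / (1 - ρ ρ̄)` is a product
of holomorphic and antiholomorphic factors, and its Wirtinger derivatives follow from the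
product, quotient and conjugation rules. Computing `r_z` on a neighbourhood and then `(r_z)_z̄`
gives `r r_{zz̄} - |r_z|² = 4 |g|⁴ |ρ'|² / (1 - |ρ|²)⁴`, which is `r⁴ / 4` because `|g|⁴ = |ρ'|²`.
-/

open ComplexConjugate Filter Topology

/-- The real differential `v ↦ f_z v + f_z̄ v̄` of a function with Wirtinger derivatives
`f_z = a`, `f_z̄ = b`. -/
noncomputable def wirtingerCLM (a b : ℂ) : ℂ →L[ℝ] ℂ :=
  a • ContinuousLinearMap.id ℝ ℂ + b • conjCLE.toContinuousLinearMap

@[simp]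
lemma wirtingerCLM_apply (a b v : ℂ) : wirtingerCLM a b v = a * v + b * conj v := by
  simp [wirtingerCLM]

lemma eq_wirtingerCLM {L : ℂ →L[ℝ] ℂ} {a b : ℂ} (h1 : L 1 = a + b) (hI : L I = (a - b) * I) :
    L = wirtingerCLM a b := by
  ext v
  have hv : v = v.re • (1 : ℂ) + v.im • I := by simp [real_smul, re_add_im]
  rw [hv, map_add, map_smul, map_smul, map_add, map_smul, map_smul, h1, hI]
  simp [conj_I, real_smul]
  ring

def HasWirtingerDerivAt (f : ℂ → ℂ) (a b z : ℂ) : Prop :=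
  HasFDerivAt f (wirtingerCLM a b) z

namespace HasWirtingerDerivAt

variable {f g : ℂ → ℂ} {a b a' b' z : ℂ}

lemma of_hasFDerivAt {L : ℂ →L[ℝ] ℂ} (hf : HasFDerivAt f L z) (h1 : L 1 = a + b)
    (hI : L I = (a - b) * I) : HasWirtingerDerivAt f a b z :=
  hf.congr_fderiv (eq_wirtingerCLM h1 hI)

lemma wd_eq (hf : HasWirtingerDerivAt f a b z) : wd f z = a := by
  rw [wd, hf.fderiv]
  simp [conj_I]
  linear_combination ((b - a) / 2) * I_sq

lemma wdb_eq (hf : HasWirtingerDerivAt f a b z) : wdb f z = b := by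
  rw [wdb, hf.fderiv]
  simp [conj_I]
  linear_combination ((a - b) / 2) * I_sq

lemma const (c z : ℂ) : HasWirtingerDerivAt (fun _ => c) 0 0 z :=
  of_hasFDerivAt (hasFDerivAt_const c z) (by simp) (by simp)

lemma add (hf : HasWirtingerDerivAt f a b z) (hg : HasWirtingerDerivAt g a' b' z) :
    HasWirtingerDerivAt (fun w => f w + g w) (a + a') (b + b') z :=
  of_hasFDerivAt (HasFDerivAt.add hf hg) (by simp; ring) (by simp; ring)

lemma sub (hf : HasWirtingerDerivAt f a b z) (hg : HasWirtingerDerivAt g a' b' z) :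
    HasWirtingerDerivAt (fun w => f w - g w) (a - a') (b - b') z :=
  of_hasFDerivAt (HasFDerivAt.sub hf hg) (by simp; ring) (by simp; ring)

lemma mul (hf : HasWirtingerDerivAt f a b z) (hg : HasWirtingerDerivAt g a' b' z) :
    HasWirtingerDerivAt (fun w => f w * g w) (f z * a' + g z * a) (f z * b' + g z * b) z :=
  of_hasFDerivAt (HasFDerivAt.mul (𝕜 := ℝ) hf hg) (by simp; ring) (by simp; ring)

lemma star (hf : HasWirtingerDerivAt f a b z) :
    HasWirtingerDerivAt (fun w => conj (f w)) (conj b) (conj a) z :=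
  of_hasFDerivAt (conjCLE.toContinuousLinearMap.hasFDerivAt.comp z hf)
    (by simp [conjCLE]; ring) (by simp [conjCLE, conj_I]; ring)

lemma comp_hasDerivAt {φ : ℂ → ℂ} {c : ℂ} (hφ : HasDerivAt φ c (f z))
    (hf : HasWirtingerDerivAt f a b z) :
    HasWirtingerDerivAt (fun w => φ (f w)) (c * a) (c * b) z :=
  of_hasFDerivAt ((hφ.hasFDerivAt.restrictScalars ℝ).comp z hf)
    (by simp; ring) (by simp; ring)

lemma inv (hf : HasWirtingerDerivAt f a b z) (h0 : f z ≠ 0) :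
    HasWirtingerDerivAt (fun w => (f w)⁻¹) (-(f z ^ 2)⁻¹ * a) (-(f z ^ 2)⁻¹ * b) z :=
  comp_hasDerivAt (hasDerivAt_inv h0) hf

lemma pow (hf : HasWirtingerDerivAt f a b z) (n : ℕ) :
    HasWirtingerDerivAt (fun w => f w ^ n) (n * f z ^ (n - 1) * a) (n * f z ^ (n - 1) * b) z :=
  comp_hasDerivAt (hasDerivAt_pow n (f z)) hf

end HasWirtingerDerivAt

lemma DifferentiableAt.hasWirtingerDerivAt {f : ℂ → ℂ} {z : ℂ} (hf : DifferentiableAt ℂ f z) :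
    HasWirtingerDerivAt f (deriv f z) 0 z :=
  .of_hasFDerivAt (hf.hasDerivAt.hasFDerivAt.restrictScalars ℝ) (by simp) (by simp [mul_comm])

lemma Filter.EventuallyEq.wd_eq {f g : ℂ → ℂ} {z : ℂ} (h : f =ᶠ[𝓝 z] g) : wd f z = wd g z := by
  rw [wd, wd, h.fderiv_eq]

lemma Filter.EventuallyEq.wdb_eq {f g : ℂ → ℂ} {z : ℂ} (h : f =ᶠ[𝓝 z] g) :
    wdb f z = wdb g z := by
  rw [wdb, wdb, h.fderiv_eq]

lemma exists_eventually_sq_eq {f : ℂ → ℂ} {z : ℂ} (hf : ∀ᶠ w in 𝓝 z, DifferentiableAt ℂ f w)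
    (hz : f z ≠ 0) : ∃ g : ℂ → ℂ, ∀ᶠ w in 𝓝 z, DifferentiableAt ℂ g w ∧ g w ^ 2 = f w := by
  refine ⟨fun w => f z ^ (2⁻¹ : ℂ) * (f w / f z) ^ (2⁻¹ : ℂ), ?_⟩
  -- the quotient stays near `1`, where the principal square root is holomorphic
  have hslit : ∀ᶠ w in 𝓝 z, f w / f z ∈ slitPlane :=
    (hf.self_of_nhds.continuousAt.div_const _).eventually_mem
      (isOpen_slitPlane.mem_nhds (by simp [div_self hz, one_mem_slitPlane]))
  filter_upwards [hf, hslit] with w hfw hw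
  refine ⟨((hfw.div_const _).cpow_const hw).const_mul _, ?_⟩
  rw [mul_pow, cpow_ofNat_inv_pow, cpow_ofNat_inv_pow, mul_div_cancel₀ _ hz]

lemma one_sub_mul_conj_ne_zero {q : ℂ} (hq : ‖q‖ < 1) : 1 - q * conj q ≠ 0 := by
  rw [mul_conj, ← Complex.sq_norm, sub_ne_zero, ne_comm]
  exact_mod_cast (pow_lt_one₀ (norm_nonneg q) hq two_ne_zero).ne

lemma ofReal_two_mul_norm_div (p q s : ℂ) (hs : s ^ 2 = p) :
    ((2 * ‖p‖ / (1 - ‖q‖ ^ 2) : ℝ) : ℂ) = 2 * s * conj s / (1 - q * conj q) := by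
  rw [← hs, mul_assoc, mul_conj, mul_conj, norm_pow, normSq_eq_norm_sq, normSq_eq_norm_sq]
  push_cast
  ring

lemma DifferentiableAt.hasWirtingerDerivAt_one_sub_mul_conj {ρ : ℂ → ℂ} {z : ℂ}
    (hρ : DifferentiableAt ℂ ρ z) :
    HasWirtingerDerivAt (fun w => 1 - ρ w * conj (ρ w))
      (-(conj (ρ z) * deriv ρ z)) (-(ρ z * conj (deriv ρ z))) z := by
  convert (HasWirtingerDerivAt.const 1 z).sub
    (hρ.hasWirtingerDerivAt.mul hρ.hasWirtingerDerivAt.star) using 1 <;> simp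

lemma Filter.EventuallyEq.wd_eventuallyEq {f g : ℂ → ℂ} {z : ℂ} (h : f =ᶠ[𝓝 z] g) :
    wd f =ᶠ[𝓝 z] wd g :=
  h.eventuallyEq_nhds.mono fun _ hw => hw.wd_eq

noncomputable def liouvilleDensity (g ρ : ℂ → ℂ) (w : ℂ) : ℂ :=
  2 * g w * conj (g w) / (1 - ρ w * conj (ρ w))

section liouvilleDensity

variable {g ρ : ℂ → ℂ}

lemma wd_liouvilleDensity {w : ℂ} (hg : DifferentiableAt ℂ g w) (hρ : DifferentiableAt ℂ ρ w)
    (hD : 1 - ρ w * conj (ρ w) ≠ 0) :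
    wd (liouvilleDensity g ρ) w = 2 * conj (g w) *
      (deriv g w * (1 - ρ w * conj (ρ w)) + g w * deriv ρ w * conj (ρ w)) /
        (1 - ρ w * conj (ρ w)) ^ 2 := by
  have h := (((HasWirtingerDerivAt.const 2 w).mul hg.hasWirtingerDerivAt).mul
    hg.hasWirtingerDerivAt.star).mul (hρ.hasWirtingerDerivAt_one_sub_mul_conj.inv hD)
  unfold liouvilleDensity
  simp only [div_eq_mul_inv]
  rw [h.wd_eq, map_zero]
  field_simp
  ring

theorem liouvilleDensity_mul_wdb_wd_sub_normSq {z : ℂ}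
    (hg : ∀ᶠ w in 𝓝 z, DifferentiableAt ℂ g w) (hρ : ∀ᶠ w in 𝓝 z, DifferentiableAt ℂ ρ w)
    (hD : ∀ᶠ w in 𝓝 z, 1 - ρ w * conj (ρ w) ≠ 0) :
    liouvilleDensity g ρ z * wdb (wd (liouvilleDensity g ρ)) z
        - normSq (wd (liouvilleDensity g ρ) z) =
      4 * (g z * conj (g z)) ^ 2 * (deriv ρ z * conj (deriv ρ z)) /
        (1 - ρ z * conj (ρ z)) ^ 4 := by
  have hwd : wd (liouvilleDensity g ρ) =ᶠ[𝓝 z] fun w => 2 * conj (g w) *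
      (deriv g w * (1 - ρ w * conj (ρ w)) + g w * deriv ρ w * conj (ρ w)) *
        ((1 - ρ w * conj (ρ w)) ^ 2)⁻¹ := by
    filter_upwards [hg, hρ, hD] with w hgw hρw hDw
    rw [wd_liouvilleDensity hgw hρw hDw, div_eq_mul_inv]
  have Wg := hg.self_of_nhds.hasWirtingerDerivAt
  have Wg' := (analyticAt_iff_eventually_differentiableAt.2 hg).deriv.differentiableAt
    |>.hasWirtingerDerivAt
  have Wρ := hρ.self_of_nhds.hasWirtingerDerivAt
  have Wρ' := (analyticAt_iff_eventually_differentiableAt.2 hρ).deriv.differentiableAt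
    |>.hasWirtingerDerivAt
  have WD := hρ.self_of_nhds.hasWirtingerDerivAt_one_sub_mul_conj
  have hDz := hD.self_of_nhds
  have W := (((HasWirtingerDerivAt.const 2 z).mul Wg.star).mul
    ((Wg'.mul WD).add ((Wg.mul Wρ').mul Wρ.star))).mul ((WD.pow 2).inv (pow_ne_zero 2 hDz))
  rw [hwd.wdb_eq, W.wdb_eq, ← mul_conj, wd_liouvilleDensity hg.self_of_nhds hρ.self_of_nhds hDz,
    liouvilleDensity]
  simp only [map_mul, map_add, map_sub, map_one, map_pow, map_ofNat, map_div₀, conj_conj]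
  field_simp
  ring

end liouvilleDensity

/-- Liouville's formula gives solutions of `r r_{z z̄} - |r_z|² - r⁴/4 = 0`. -/
theorem stmt0 (U : Set ℂ) (hU : IsOpen U) (ρ : ℂ → ℂ)
    (hρ : DifferentiableOn ℂ ρ U)
    (hρ1 : ∀ z ∈ U, ‖ρ z‖ < 1)
    (hρ' : ∀ z ∈ U, deriv ρ z ≠ 0)
    (r : ℂ → ℂ)
    (hr : ∀ z ∈ U,
      r z = ((2 * ‖deriv ρ z‖ / (1 - ‖ρ z‖ ^ 2) : ℝ) : ℂ)) :
    ∀ z ∈ U,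
      r z * wdb (wd r) z - (Complex.normSq (wd r z) : ℂ) - (1 / 4 : ℂ) * (r z) ^ 4 = 0 := by
  intro z hz
  have hUz : ∀ᶠ w in 𝓝 z, w ∈ U := hU.mem_nhds hz
  have hρd : ∀ᶠ w in 𝓝 z, DifferentiableAt ℂ ρ w :=
    hUz.mono fun w hw => hρ.differentiableAt (hU.mem_nhds hw)
  have hρ'd : ∀ᶠ w in 𝓝 z, DifferentiableAt ℂ (deriv ρ) w :=
    analyticAt_iff_eventually_differentiableAt.1
      (analyticAt_iff_eventually_differentiableAt.2 hρd).deriv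
  obtain ⟨g, hg⟩ := exists_eventually_sq_eq hρ'd (hρ' z hz)
  have hr' : r =ᶠ[𝓝 z] liouvilleDensity g ρ := by
    filter_upwards [hUz, hg] with w hw hgw
    rw [hr w hw, ofReal_two_mul_norm_div _ _ _ hgw.2, liouvilleDensity]
  have hD : ∀ᶠ w in 𝓝 z, 1 - ρ w * conj (ρ w) ≠ 0 :=
    hUz.mono fun w hw => one_sub_mul_conj_ne_zero (hρ1 w hw)
  rw [hr'.wd_eventuallyEq.wdb_eq, hr'.wd_eq, hr'.self_of_nhds,
    liouvilleDensity_mul_wdb_wd_sub_normSq (hg.mono fun _ h => h.1) hρd hD, liouvilleDensity,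
    ← hg.self_of_nhds.2, map_pow]
  field_simp [hD.self_of_nhds]
  ring
end

section
/- Let $f : I \to \mathbb{R}$ be a smooth function on an open interval with $f''(x) \neq 0$ for all $x$, and suppose the graph of $f$ lies on a conic, i.e. there exist real constants $a,b,c,d,e,g$, not all zero, with $a x^2 + b x f(x) + c f(x)^2 + d x + e f(x) + g = 0$ for all $x \in I$. Then $f$ satisfies the Monge equation $9 f^{(5)} (f'')^2 - 45 f^{(4)} f''' f'' + 40 (f''')^3 = 0$ on $I$. -/
/-- a smooth function with nonvanishing second derivative whose graph lies
on a conic satisfies the classical Monge equation. -/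
theorem stmt3 (a b : ℝ) (f : ℝ → ℝ)
    (hf : ContDiffOn ℝ (⊤ : ℕ∞) f (Set.Ioo a b))
    (hf'' : ∀ x ∈ Set.Ioo a b, iteratedDeriv 2 f x ≠ 0)
    (hconic : ∃ A B C D E G : ℝ,
      ¬(A = 0 ∧ B = 0 ∧ C = 0 ∧ D = 0 ∧ E = 0 ∧ G = 0) ∧
      ∀ x ∈ Set.Ioo a b,
        A * x ^ 2 + B * x * f x + C * (f x) ^ 2 + D * x + E * f x + G = 0) :
    ∀ x ∈ Set.Ioo a b,
      9 * iteratedDeriv 5 f x * (iteratedDeriv 2 f x) ^ 2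
        - 45 * iteratedDeriv 4 f x * iteratedDeriv 3 f x * iteratedDeriv 2 f x
        + 40 * (iteratedDeriv 3 f x) ^ 3 = 0 := by
  obtain ⟨A, B, C, D, E, G, hne, heq⟩ := hconic
  set s : Set ℝ := Set.Ioo a b with hs
  have hso : IsOpen s := isOpen_Ioo
  -- all iterates of deriv are smooth on s
  have hd : ∀ k : ℕ, ContDiffOn ℝ (⊤ : ℕ∞) (deriv^[k] f) s := by
    intro k
    induction k with
    | zero => exact hf
    | succ k ih =>
      rw [Function.iterate_succ_apply']
      exact ih.deriv_of_isOpen hso (by simp)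
  have hdiff : ∀ (k : ℕ) (y : ℝ), y ∈ s →
      HasDerivAt (deriv^[k] f) (deriv^[k+1] f y) y := by
    intro k y hy
    have h1 : DifferentiableAt ℝ (deriv^[k] f) y :=
      ((hd k).differentiableOn (by simp)).differentiableAt (hso.mem_nhds hy)
    have := h1.hasDerivAt
    rwa [show deriv^[k+1] f y = deriv (deriv^[k] f) y from by
      rw [Function.iterate_succ_apply']]
  -- shorthand
  set d1 : ℝ → ℝ := deriv^[1] f with hd1
  set d2 : ℝ → ℝ := deriv^[2] f with hd2
  set d3 : ℝ → ℝ := deriv^[3] f with hd3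
  set d4 : ℝ → ℝ := deriv^[4] f with hd4
  set d5 : ℝ → ℝ := deriv^[5] f with hd5
  have hf0 : ∀ y ∈ s, HasDerivAt f (d1 y) y := fun y hy => hdiff 0 y hy
  have hf1 : ∀ y ∈ s, HasDerivAt d1 (d2 y) y := fun y hy => hdiff 1 y hy
  have hf2 : ∀ y ∈ s, HasDerivAt d2 (d3 y) y := fun y hy => hdiff 2 y hy
  have hf3 : ∀ y ∈ s, HasDerivAt d3 (d4 y) y := fun y hy => hdiff 3 y hy
  have hf4 : ∀ y ∈ s, HasDerivAt d4 (d5 y) y := fun y hy => hdiff 4 y hy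
  -- the chain of derivative functions
  set e0 : ℝ → ℝ := fun y => A * y ^ 2 + B * y * f y + C * (f y) ^ 2 + D * y + E * f y + G with he0
  set e1 : ℝ → ℝ := fun y => 2*A*y + B*(f y + y * d1 y) + C*(2*f y*d1 y) + D + E*d1 y with he1
  set e2 : ℝ → ℝ := fun y => 2*A + B*(2*d1 y + y*d2 y) + C*(2*(d1 y)^2 + 2*f y*d2 y) + E*d2 y with he2
  set e3 : ℝ → ℝ := fun y => B*(3*d2 y + y*d3 y) + C*(6*d1 y*d2 y + 2*f y*d3 y) + E*d3 y with he3
  set e4 : ℝ → ℝ := fun y => B*(4*d3 y + y*d4 y) + C*(6*(d2 y)^2 + 8*d1 y*d3 y + 2*f y*d4 y) + E*d4 y with he4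
  set e5 : ℝ → ℝ := fun y => B*(5*d4 y + y*d5 y) + C*(20*d2 y*d3 y + 10*d1 y*d4 y + 2*f y*d5 y) + E*d5 y with he5
  have hD0 : ∀ y ∈ s, HasDerivAt e0 (e1 y) y := by
    intro y hy
    have h := (((((hasDerivAt_pow 2 y).const_mul A).add
      (((hasDerivAt_id y).mul (hf0 y hy)).const_mul B)).add
      (((hf0 y hy).pow 2).const_mul C)).add ((hasDerivAt_id y).const_mul D)).add
      (((hf0 y hy).const_mul E).add_const G)
    convert h using 1
    all_goals first
      | (ext z; simp only [he0, he1, id_eq, Pi.add_apply, Pi.mul_apply, Pi.pow_apply]; push_cast; ring)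
      | rfl
      | (simp only [he0, he1, id_eq]; push_cast; ring)
  have hD1 : ∀ y ∈ s, HasDerivAt e1 (e2 y) y := by
    intro y hy
    have h := ((((hasDerivAt_id y).const_mul (2*A)).add
      (((hf0 y hy).add ((hasDerivAt_id y).mul (hf1 y hy))).const_mul B)).add
      ((((hf0 y hy).const_mul 2).mul (hf1 y hy)).const_mul C)).add
      ((hasDerivAt_const y D).add ((hf1 y hy).const_mul E))
    convert h using 1
    all_goals first
      | (ext z; simp only [he1, he2, id_eq, Pi.add_apply, Pi.mul_apply, Pi.pow_apply]; push_cast; ring)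
      | rfl
      | (simp only [he1, he2, id_eq]; push_cast; ring)
  have hD2 : ∀ y ∈ s, HasDerivAt e2 (e3 y) y := by
    intro y hy
    have h := (((hasDerivAt_const y (2*A)).add
      ((((hf1 y hy).const_mul 2).add ((hasDerivAt_id y).mul (hf2 y hy))).const_mul B)).add
      (((((hf1 y hy).pow 2).const_mul 2).add (((hf0 y hy).const_mul 2).mul (hf2 y hy))).const_mul C)).add
      ((hf2 y hy).const_mul E)
    convert h using 1
    all_goals first
      | (ext z; simp only [he2, he3, id_eq, Pi.add_apply, Pi.mul_apply, Pi.pow_apply]; push_cast; ring)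
      | rfl
      | (simp only [he2, he3, id_eq]; push_cast; ring)
  have hD3 : ∀ y ∈ s, HasDerivAt e3 (e4 y) y := by
    intro y hy
    have h := (((((hf2 y hy).const_mul 3).add ((hasDerivAt_id y).mul (hf3 y hy))).const_mul B).add
      (((((hf1 y hy).const_mul 6).mul (hf2 y hy)).add (((hf0 y hy).const_mul 2).mul (hf3 y hy))).const_mul C)).add
      ((hf3 y hy).const_mul E)
    convert h using 1
    all_goals first
      | (ext z; simp only [he3, he4, id_eq, Pi.add_apply, Pi.mul_apply, Pi.pow_apply]; push_cast; ring)
      | rfl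
      | (simp only [he3, he4, id_eq]; push_cast; ring)
  have hD4 : ∀ y ∈ s, HasDerivAt e4 (e5 y) y := by
    intro y hy
    have h := (((((hf3 y hy).const_mul 4).add ((hasDerivAt_id y).mul (hf4 y hy))).const_mul B).add
      (((((hf2 y hy).pow 2).const_mul 6).add
        ((((hf1 y hy).const_mul 8).mul (hf3 y hy)).add
          (((hf0 y hy).const_mul 2).mul (hf4 y hy)))).const_mul C)).add
      ((hf4 y hy).const_mul E)
    convert h using 1
    all_goals first
      | (ext z; simp only [he4, he5, id_eq, Pi.add_apply, Pi.mul_apply, Pi.pow_apply]; push_cast; ring)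
      | rfl
      | (simp only [he4, he5, id_eq]; push_cast; ring)
  -- vanishing of all e_k on s
  have step : ∀ (u v : ℝ → ℝ), (∀ y ∈ s, HasDerivAt u (v y) y) → (∀ y ∈ s, u y = 0) →
      ∀ y ∈ s, v y = 0 := by
    intro u v hder hzero y hy
    have hev : u =ᶠ[nhds y] (fun _ => (0:ℝ)) :=
      Filter.eventuallyEq_of_mem (hso.mem_nhds hy) hzero
    have : deriv u y = deriv (fun _ => (0:ℝ)) y := hev.deriv_eq
    rw [deriv_const] at this
    rw [← (hder y hy).deriv, this]
  have h0 : ∀ y ∈ s, e0 y = 0 := heq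
  have h1 := step e0 e1 hD0 h0
  have h2 := step e1 e2 hD1 h1
  have h3 := step e2 e3 hD2 h2
  have h4 := step e3 e4 hD3 h3
  have h5 := step e4 e5 hD4 h4
  intro x hx
  have E1 := h1 x hx
  have E2 := h2 x hx
  have E3 := h3 x hx
  have E4 := h4 x hx
  have E5 := h5 x hx
  simp only [he1, he2, he3, he4, he5] at E1 E2 E3 E4 E5
  have hid : ∀ k, iteratedDeriv k f x = deriv^[k] f x := fun k => by
    rw [iteratedDeriv_eq_iterate]
  rw [hid 2, hid 3, hid 4, hid 5]
  have hf2x : d2 x ≠ 0 := by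
    have := hf'' x hx
    rwa [hid 2] at this
  by_cases hBCE : B = 0 ∧ C = 0 ∧ E = 0
  · obtain ⟨hB, hC, hE⟩ := hBCE
    exfalso
    have hA : A = 0 := by
      rw [hB, hC, hE] at E2; linarith
    have hDz : D = 0 := by
      rw [hA, hB, hC, hE] at E1; linarith
    have hG : G = 0 := by
      have := h0 x hx
      simp only [he0] at this
      rw [hA, hB, hC, hDz, hE] at this; linarith
    exact hne ⟨hA, hB, hC, hDz, hE, hG⟩
  · -- 3x3 determinant argument
    set M : Matrix (Fin 3) (Fin 3) ℝ :=
      !![3*d2 x + x*d3 x, 6*d1 x*d2 x + 2*f x*d3 x, d3 x;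
         4*d3 x + x*d4 x, 6*(d2 x)^2 + 8*d1 x*d3 x + 2*f x*d4 x, d4 x;
         5*d4 x + x*d5 x, 20*d2 x*d3 x + 10*d1 x*d4 x + 2*f x*d5 x, d5 x] with hM
    have hv : (![B, C, E] : Fin 3 → ℝ) ≠ 0 := by
      intro h
      apply hBCE
      refine ⟨?_, ?_, ?_⟩
      · exact congrFun h 0
      · exact congrFun h 1
      · exact congrFun h 2
    have hMv : M.mulVec ![B, C, E] = 0 := by
      funext i
      fin_cases i <;>
        simp [hM, Matrix.mulVec, dotProduct, Fin.sum_univ_three]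
      · linear_combination E3
      · linear_combination E4
      · linear_combination E5
    have hdet : M.det = 0 := by
      rw [← Matrix.exists_mulVec_eq_zero_iff]
      exact ⟨![B, C, E], hv, hMv⟩
    simp [hM, Matrix.det_fin_three] at hdet
    have key : d2 x * (2 * (9 * d5 x * (d2 x)^2 - 45 * d4 x * d3 x * d2 x + 40 * (d3 x)^3)) = 0 := by
      linear_combination hdet
    rcases mul_eq_zero.mp key with h | h
    · exact absurd h hf2x
    · linarith
end

section
/- Let $f : I \to \mathbb{R}$ be smooth on an open interval with $f'' > 0$ everywhere. Then $f$ satisfies the Monge equation $9 f^{(5)} (f'')^2 - 45 f^{(4)} f''' f'' + 40 (f''')^3 = 0$ on $I$ if and only if the function $g := (f'')^{-2/3}$ satisfies $g''' = 0$ on $I$ (equivalently, $g$ is a polynomial of degree at most 2). -/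
private lemma stmt4_hasDerivAt (a b : ℝ) (f : ℝ → ℝ)
    (hf : ContDiffOn ℝ (⊤ : ℕ∞) f (Set.Ioo a b)) (n : ℕ) (y : ℝ) (hy : y ∈ Set.Ioo a b) :
    HasDerivAt (iteratedDeriv n f) (iteratedDeriv (n + 1) f y) y := by
  have hs : IsOpen (Set.Ioo a b) := isOpen_Ioo
  have hd : DifferentiableAt ℝ (iteratedDeriv n f) y := by
    have h1 : DifferentiableWithinAt ℝ (iteratedDerivWithin n f (Set.Ioo a b))
        (Set.Ioo a b) y :=
      hf.differentiableOn_iteratedDerivWithin (by exact_mod_cast lt_top_iff_ne_top.mpr (by simp))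
        hs.uniqueDiffOn y hy
    have heq : Set.EqOn (iteratedDerivWithin n f (Set.Ioo a b)) (iteratedDeriv n f)
        (Set.Ioo a b) := by
      intro z hz
      rw [iteratedDerivWithin, iteratedDeriv, iteratedFDerivWithin_of_isOpen n hs hz]
    exact (h1.congr (fun z hz => (heq hz).symm) (heq hy).symm).differentiableAt
      (hs.mem_nhds hy)
  rw [iteratedDeriv_succ]
  exact hd.hasDerivAt

private lemma stmt4_key (a b : ℝ) (f : ℝ → ℝ)
    (hf : ContDiffOn ℝ (⊤ : ℕ∞) f (Set.Ioo a b))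
    (hf'' : ∀ x ∈ Set.Ioo a b, 0 < iteratedDeriv 2 f x) :
    ∀ x ∈ Set.Ioo a b,
      iteratedDeriv 3 (fun y => (iteratedDeriv 2 f y) ^ (-(2 : ℝ) / 3)) x
        = (-(2 : ℝ) / 27) * (iteratedDeriv 2 f x) ^ (-(11 : ℝ) / 3) *
          (9 * iteratedDeriv 5 f x * (iteratedDeriv 2 f x) ^ 2
            - 45 * iteratedDeriv 4 f x * iteratedDeriv 3 f x * iteratedDeriv 2 f x
            + 40 * (iteratedDeriv 3 f x) ^ 3) := by
  intro x hx
  have hs : IsOpen (Set.Ioo a b) := isOpen_Ioo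
  have hA := stmt4_hasDerivAt a b f hf
  set g : ℝ → ℝ := fun y => (iteratedDeriv 2 f y) ^ (-(2 : ℝ) / 3) with hg
  set G1 : ℝ → ℝ := fun y => iteratedDeriv 3 f y * (-(2 : ℝ) / 3) *
      iteratedDeriv 2 f y ^ (-(2 : ℝ) / 3 - 1) with hG1
  set G2 : ℝ → ℝ := fun y =>
      iteratedDeriv 4 f y * (-(2 : ℝ) / 3) * iteratedDeriv 2 f y ^ (-(2 : ℝ) / 3 - 1)
      + iteratedDeriv 3 f y * (-(2 : ℝ) / 3) *
        (iteratedDeriv 3 f y * (-(2 : ℝ) / 3 - 1) *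
          iteratedDeriv 2 f y ^ (-(2 : ℝ) / 3 - 1 - 1)) with hG2
  set G3 : ℝ → ℝ := fun y =>
      (iteratedDeriv 5 f y * (-(2 : ℝ) / 3) * iteratedDeriv 2 f y ^ (-(2 : ℝ) / 3 - 1)
        + iteratedDeriv 4 f y * (-(2 : ℝ) / 3) *
          (iteratedDeriv 3 f y * (-(2 : ℝ) / 3 - 1) *
            iteratedDeriv 2 f y ^ (-(2 : ℝ) / 3 - 1 - 1)))
      + (iteratedDeriv 4 f y * (-(2 : ℝ) / 3) *
          (iteratedDeriv 3 f y * (-(2 : ℝ) / 3 - 1) *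
            iteratedDeriv 2 f y ^ (-(2 : ℝ) / 3 - 1 - 1))
        + iteratedDeriv 3 f y * (-(2 : ℝ) / 3) *
          ((iteratedDeriv 4 f y * (-(2 : ℝ) / 3 - 1) *
              iteratedDeriv 2 f y ^ (-(2 : ℝ) / 3 - 1 - 1)
            + iteratedDeriv 3 f y * (-(2 : ℝ) / 3 - 1) *
              (iteratedDeriv 3 f y * (-(2 : ℝ) / 3 - 1 - 1) *
                iteratedDeriv 2 f y ^ (-(2 : ℝ) / 3 - 1 - 1 - 1))))) with hG3
  have h1 : ∀ y ∈ Set.Ioo a b, HasDerivAt g (G1 y) y := fun y hy =>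
    (hA 2 y hy).rpow_const (Or.inl (hf'' y hy).ne')
  have h2 : ∀ y ∈ Set.Ioo a b, HasDerivAt G1 (G2 y) y := fun y hy =>
    ((hA 3 y hy).mul_const _).mul ((hA 2 y hy).rpow_const (Or.inl (hf'' y hy).ne'))
  have h3 : ∀ y ∈ Set.Ioo a b, HasDerivAt G2 (G3 y) y := fun y hy =>
    (((hA 4 y hy).mul_const _).mul ((hA 2 y hy).rpow_const (Or.inl (hf'' y hy).ne'))).add
      (((hA 3 y hy).mul_const _).mul
        (((hA 3 y hy).mul_const _).mul ((hA 2 y hy).rpow_const (Or.inl (hf'' y hy).ne'))))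
  have e1 : ∀ y ∈ Set.Ioo a b, deriv g y = G1 y := fun y hy => (h1 y hy).deriv
  have e2 : ∀ y ∈ Set.Ioo a b, deriv (deriv g) y = G2 y := by
    intro y hy
    have hev : deriv g =ᶠ[nhds y] G1 :=
      Filter.eventually_of_mem (hs.mem_nhds hy) (fun z hz => e1 z hz)
    rw [hev.deriv_eq]
    exact (h2 y hy).deriv
  have e3 : deriv (deriv (deriv g)) x = G3 x := by
    have hev : deriv (deriv g) =ᶠ[nhds x] G2 :=
      Filter.eventually_of_mem (hs.mem_nhds hx) (fun z hz => e2 z hz)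
    rw [hev.deriv_eq]
    exact (h3 x hx).deriv
  have hg3 : iteratedDeriv 3 g x = deriv (deriv (deriv g)) x := by
    rw [show (3 : ℕ) = 2 + 1 from rfl, iteratedDeriv_succ,
      show (2 : ℕ) = 1 + 1 from rfl, iteratedDeriv_succ, iteratedDeriv_one]
  rw [hg3, e3, hG3]
  beta_reduce
  have hw : 0 < iteratedDeriv 2 f x := hf'' x hx
  set w := iteratedDeriv 2 f x with hwdef
  have hE1 : w ^ (-(2 : ℝ) / 3 - 1) = w ^ (-(11 : ℝ) / 3) * w ^ 2 := by
    rw [show -(2 : ℝ) / 3 - 1 = -(11 : ℝ) / 3 + 2 by norm_num, Real.rpow_add hw,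
      show ((2 : ℝ)) = ((2 : ℕ) : ℝ) by norm_num, Real.rpow_natCast]
  have hE2 : w ^ (-(2 : ℝ) / 3 - 1 - 1) = w ^ (-(11 : ℝ) / 3) * w := by
    rw [show -(2 : ℝ) / 3 - 1 - 1 = -(11 : ℝ) / 3 + 1 by norm_num, Real.rpow_add hw,
      Real.rpow_one]
  have hE3 : w ^ (-(2 : ℝ) / 3 - 1 - 1 - 1) = w ^ (-(11 : ℝ) / 3) := by
    norm_num
  rw [hE1, hE2, hE3]
  ring

/-- for `f'' > 0`, the Monge equation holds iff `g = (f'')^{-2/3}`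
satisfies `g''' = 0`. -/
theorem stmt4 (a b : ℝ) (f : ℝ → ℝ)
    (hf : ContDiffOn ℝ (⊤ : ℕ∞) f (Set.Ioo a b))
    (hf'' : ∀ x ∈ Set.Ioo a b, 0 < iteratedDeriv 2 f x) :
    (∀ x ∈ Set.Ioo a b,
      9 * iteratedDeriv 5 f x * (iteratedDeriv 2 f x) ^ 2
        - 45 * iteratedDeriv 4 f x * iteratedDeriv 3 f x * iteratedDeriv 2 f x
        + 40 * (iteratedDeriv 3 f x) ^ 3 = 0)
    ↔ (∀ x ∈ Set.Ioo a b,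
        iteratedDeriv 3 (fun y => (iteratedDeriv 2 f y) ^ (-(2 : ℝ) / 3)) x = 0) := by
  constructor
  · intro h x hx
    rw [stmt4_key a b f hf hf'' x hx, h x hx, mul_zero]
  · intro h x hx
    have hk := stmt4_key a b f hf hf'' x hx
    rw [h x hx] at hk
    rcases mul_eq_zero.mp hk.symm with h0 | h0
    · exfalso
      have hpos : 0 < (iteratedDeriv 2 f x) ^ (-(11 : ℝ) / 3) :=
        Real.rpow_pos_of_pos (hf'' x hx) _
      nlinarith
    · exact h0
end

section
/- Let $F$ be a smooth real-valued function of $(z_1, \bar z_1)$ (with $z_2$ suppressed) defined near $0 \in \mathbb{C}$ with $F_{1\bar 1} > 0$ everywhere. Set $G := F_{1\bar 1}^{-2/3}$. Then $F$ satisfies the complex Monge equation $9 F_{1111\bar 1} (F_{1\bar 1})^2 - 45 F_{111\bar 1} F_{11\bar 1} F_{1\bar 1} + 40 (F_{11\bar 1})^3 = 0$ if and only if $G_{111} = 0$, i.e. $\partial_{z_1}^3 G = 0$. -/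
open Complex

lemma wd_congr {f g : ℂ → ℂ} {z : ℂ} (h : f =ᶠ[nhds z] g) : wd f z = wd g z := by
  unfold wd; rw [h.fderiv_eq]

lemma contDiffOn_wd {f : ℂ → ℂ} {U : Set ℂ} (hU : IsOpen U)
    (hf : ContDiffOn ℝ (⊤ : ℕ∞) f U) : ContDiffOn ℝ (⊤ : ℕ∞) (wd f) U := by
  have hf' : ContDiffOn ℝ (⊤ : ℕ∞) (fun z => fderiv ℝ f z) U :=
    ((contDiffOn_infty_iff_fderiv_of_isOpen hU).1 hf).2
  exact contDiffOn_const.mul ((hf'.clm_apply contDiffOn_const).sub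
    (contDiffOn_const.mul (hf'.clm_apply contDiffOn_const)))

lemma contDiffOn_wdb {f : ℂ → ℂ} {U : Set ℂ} (hU : IsOpen U)
    (hf : ContDiffOn ℝ (⊤ : ℕ∞) f U) : ContDiffOn ℝ (⊤ : ℕ∞) (wdb f) U := by
  have hf' : ContDiffOn ℝ (⊤ : ℕ∞) (fun z => fderiv ℝ f z) U :=
    ((contDiffOn_infty_iff_fderiv_of_isOpen hU).1 hf).2
  exact contDiffOn_const.mul ((hf'.clm_apply contDiffOn_const).add
    (contDiffOn_const.mul (hf'.clm_apply contDiffOn_const)))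

lemma wd_mul {f g : ℂ → ℂ} {z : ℂ} (hf : DifferentiableAt ℝ f z)
    (hg : DifferentiableAt ℝ g z) :
    wd (fun w => f w * g w) z = wd f z * g z + f z * wd g z := by
  unfold wd
  rw [fderiv_fun_mul hf hg]
  simp only [ContinuousLinearMap.add_apply, ContinuousLinearMap.smul_apply, smul_eq_mul]
  ring

lemma wd_add {f g : ℂ → ℂ} {z : ℂ} (hf : DifferentiableAt ℝ f z)
    (hg : DifferentiableAt ℝ g z) :
    wd (fun w => f w + g w) z = wd f z + wd g z := by
  unfold wd
  rw [fderiv_fun_add hf hg]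
  simp only [ContinuousLinearMap.add_apply]
  ring

lemma wd_const_mul {f : ℂ → ℂ} {z : ℂ} (c : ℂ) (hf : DifferentiableAt ℝ f z) :
    wd (fun w => c * f w) z = c * wd f z := by
  unfold wd
  rw [show (fun w => c * f w) = (fun w => c • f w) from rfl]
  rw [fderiv_fun_const_smul hf c]
  simp only [ContinuousLinearMap.smul_apply, smul_eq_mul]
  ring

lemma wd_rpow_chain {r : ℂ → ℝ} {z : ℂ} (hr : DifferentiableAt ℝ r z) (hp : 0 < r z) (p : ℝ) :
    wd (fun w => ((r w ^ p : ℝ) : ℂ)) z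
      = (p : ℂ) * ((r z ^ (p - 1) : ℝ) : ℂ) * wd (fun w => ((r w : ℝ) : ℂ)) z := by
  have hφ : HasDerivAt (fun t : ℝ => t ^ p) (p * r z ^ (p - 1)) (r z) :=
    Real.hasDerivAt_rpow_const (Or.inl hp.ne')
  have h1 : HasFDerivAt (fun w => (r w) ^ p) ((p * r z ^ (p - 1)) • fderiv ℝ r z) z :=
    hφ.comp_hasFDerivAt z hr.hasFDerivAt
  have h2 : HasFDerivAt (fun w => (((r w) ^ p : ℝ) : ℂ))
      (Complex.ofRealCLM.comp ((p * r z ^ (p - 1)) • fderiv ℝ r z)) z :=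
    Complex.ofRealCLM.hasFDerivAt.comp z h1
  have h3 : HasFDerivAt (fun w => ((r w : ℝ) : ℂ))
      (Complex.ofRealCLM.comp (fderiv ℝ r z)) z :=
    Complex.ofRealCLM.hasFDerivAt.comp z hr.hasFDerivAt
  unfold wd
  rw [h2.fderiv, h3.fderiv]
  simp only [ContinuousLinearMap.comp_apply, ContinuousLinearMap.smul_apply, smul_eq_mul,
    Complex.ofRealCLM_apply, Complex.ofReal_mul]
  ring

lemma diff_rpow_comp {r : ℂ → ℝ} {z : ℂ} (hr : DifferentiableAt ℝ r z) (hp : 0 < r z) (p : ℝ) :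
    DifferentiableAt ℝ (fun w => ((r w ^ p : ℝ) : ℂ)) z := by
  have hφ : HasDerivAt (fun t : ℝ => t ^ p) (p * r z ^ (p - 1)) (r z) :=
    Real.hasDerivAt_rpow_const (Or.inl hp.ne')
  exact (Complex.ofRealCLM.hasFDerivAt.comp z
    (hφ.comp_hasFDerivAt z hr.hasFDerivAt)).differentiableAt

lemma real_wdb_wd {F : ℂ → ℝ} {U : Set ℂ} (hU : IsOpen U)
    (hF : ContDiffOn ℝ (⊤ : ℕ∞) (fun z => (F z : ℂ)) U) {z : ℂ} (hz : z ∈ U) :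
    wdb (wd (fun w => (F w : ℂ))) z = (((wdb (wd (fun w => (F w : ℂ))) z).re : ℝ) : ℂ) := by
  have hFrt : ContDiffOn ℝ (⊤ : ℕ∞) F U := by
    have := (Complex.reCLM.contDiff (n := ((⊤ : ℕ∞) : WithTop ℕ∞))).comp_contDiffOn hF
    simpa [Function.comp_def] using this
  have hFr : ContDiffOn ℝ (⊤ : ℕ∞) F U := hFrt.of_le (by simp)
  set D := fderiv ℝ F with hD
  have hDsm : ContDiffOn ℝ (⊤ : ℕ∞) D U :=
    ((contDiffOn_infty_iff_fderiv_of_isOpen hU).1 hFr).2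
  have hdiffF : ∀ w ∈ U, DifferentiableAt ℝ F w := fun w hw =>
    (hFr.differentiableOn (by simp)).differentiableAt (hU.mem_nhds hw)
  have hwdeq : ∀ w ∈ U, wd (fun v => (F v : ℂ)) w
      = (1/2 : ℂ) * (((D w 1 : ℝ) : ℂ) - Complex.I * ((D w Complex.I : ℝ) : ℂ)) := by
    intro w hw
    have h : HasFDerivAt (fun v => (F v : ℂ)) (Complex.ofRealCLM.comp (D w)) w :=
      Complex.ofRealCLM.hasFDerivAt.comp w (hdiffF w hw).hasFDerivAt
    unfold wd; rw [h.fderiv]; simp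
  have hDz : DifferentiableAt ℝ D z :=
    (hDsm.differentiableOn (by simp)).differentiableAt (hU.mem_nhds hz)
  have hp : DifferentiableAt ℝ (fun w => D w 1) z :=
    hDz.clm_apply (differentiableAt_const _)
  have hq : DifferentiableAt ℝ (fun w => D w Complex.I) z :=
    hDz.clm_apply (differentiableAt_const _)
  have h1 : HasFDerivAt (fun w => ((D w 1 : ℝ) : ℂ))
      (Complex.ofRealCLM.comp (fderiv ℝ (fun w => D w 1) z)) z :=
    Complex.ofRealCLM.hasFDerivAt.comp z hp.hasFDerivAt
  have h2 : HasFDerivAt (fun w => ((D w Complex.I : ℝ) : ℂ))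
      (Complex.ofRealCLM.comp (fderiv ℝ (fun w => D w Complex.I) z)) z :=
    Complex.ofRealCLM.hasFDerivAt.comp z hq.hasFDerivAt
  have hg : HasFDerivAt
      (fun w => (1/2 : ℂ) * (((D w 1 : ℝ) : ℂ) - Complex.I * ((D w Complex.I : ℝ) : ℂ)))
      ((1/2 : ℂ) • ((Complex.ofRealCLM.comp (fderiv ℝ (fun w => D w 1) z))
        - Complex.I • (Complex.ofRealCLM.comp (fderiv ℝ (fun w => D w Complex.I) z)))) z :=
    (h1.sub (h2.const_mul Complex.I)).const_mul (1/2 : ℂ)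
  have hE : fderiv ℝ (wd (fun v => (F v : ℂ))) z
      = ((1/2 : ℂ) • ((Complex.ofRealCLM.comp (fderiv ℝ (fun w => D w 1) z))
        - Complex.I • (Complex.ofRealCLM.comp (fderiv ℝ (fun w => D w Complex.I) z)))) := by
    have heq : wd (fun v => (F v : ℂ)) =ᶠ[nhds z]
        (fun w => (1/2 : ℂ) * (((D w 1 : ℝ) : ℂ) - Complex.I * ((D w Complex.I : ℝ) : ℂ))) := by
      filter_upwards [hU.mem_nhds hz] with w hw using hwdeq w hw
    rw [heq.fderiv_eq]; exact hg.fderiv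
  have hsymm : fderiv ℝ (fun w => D w Complex.I) z 1
      = fderiv ℝ (fun w => D w 1) z Complex.I := by
    have hflipI : fderiv ℝ (fun w => D w Complex.I) z = (fderiv ℝ D z).flip Complex.I := by
      rw [fderiv_clm_apply hDz (differentiableAt_const _)]; simp
    have hflip1 : fderiv ℝ (fun w => D w 1) z = (fderiv ℝ D z).flip 1 := by
      rw [fderiv_clm_apply hDz (differentiableAt_const _)]; simp
    have hs : IsSymmSndFDerivAt ℝ F z :=
      ContDiffAt.isSymmSndFDerivAt (hFrt.contDiffAt (hU.mem_nhds hz)) (by rw [minSmoothness_of_isRCLikeNormedField]; exact WithTop.coe_le_coe.mpr le_top)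
    rw [hflipI, hflip1]
    simpa [hD] using hs 1 Complex.I
  unfold wdb
  rw [hE]
  simp only [ContinuousLinearMap.smul_apply, ContinuousLinearMap.sub_apply,
    ContinuousLinearMap.comp_apply, Complex.ofRealCLM_apply, smul_eq_mul, hsymm]
  apply Complex.ext <;> simp

lemma key' {U : Set ℂ} (hU : IsOpen U) {u : ℂ → ℂ}
    (hu : ContDiffOn ℝ (⊤ : ℕ∞) u U)
    (hureal : ∀ w ∈ U, u w = (((u w).re : ℝ) : ℂ))
    (hpos : ∀ w ∈ U, 0 < (u w).re) {z : ℂ} (hz : z ∈ U) :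
    wd (wd (wd (fun w => (((u w).re ^ (-(2 : ℝ) / 3) : ℝ) : ℂ)))) z
      = (-(2/27) : ℂ) * (((u z).re ^ (-(2 : ℝ) / 3 - 1 - 1 - 1) : ℝ) : ℂ)
        * (9 * wd (wd (wd u)) z * (u z) ^ 2
          - 45 * wd (wd u) z * wd u z * u z + 40 * (wd u z) ^ 3) := by
  have hdiffu : ∀ w ∈ U, DifferentiableAt ℝ u w := fun w hw =>
    (hu.differentiableOn (by simp)).differentiableAt (hU.mem_nhds hw)
  have hA1 : ContDiffOn ℝ (⊤ : ℕ∞) (wd u) U := contDiffOn_wd hU hu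
  have hA2 : ContDiffOn ℝ (⊤ : ℕ∞) (wd (wd u)) U := contDiffOn_wd hU hA1
  have hdA1 : ∀ w ∈ U, DifferentiableAt ℝ (wd u) w := fun w hw =>
    (hA1.differentiableOn (by simp)).differentiableAt (hU.mem_nhds hw)
  have hdA2 : ∀ w ∈ U, DifferentiableAt ℝ (wd (wd u)) w := fun w hw =>
    (hA2.differentiableOn (by simp)).differentiableAt (hU.mem_nhds hw)
  have hrd : ∀ w ∈ U, DifferentiableAt ℝ (fun v => (u v).re) w := fun w hw =>
    (Complex.reCLM.differentiableAt.comp w (hdiffu w hw) : _)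
  have hgd : ∀ (p : ℝ), ∀ w ∈ U, DifferentiableAt ℝ (fun v => (((u v).re ^ p : ℝ) : ℂ)) w :=
    fun p w hw => diff_rpow_comp (hrd w hw) (hpos w hw) p
  have hwdcr : ∀ w ∈ U, wd (fun v => (((u v).re : ℝ) : ℂ)) w = wd u w := by
    intro w hw
    apply wd_congr
    filter_upwards [hU.mem_nhds hw] with v hv using (hureal v hv).symm
  have hchain : ∀ (p : ℝ), ∀ w ∈ U, wd (fun v => (((u v).re ^ p : ℝ) : ℂ)) w
      = (p : ℂ) * (((u w).re ^ (p - 1) : ℝ) : ℂ) * wd u w := by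
    intro p w hw
    rw [wd_rpow_chain (hrd w hw) (hpos w hw) p, hwdcr w hw]
  set q0 : ℝ := -(2 : ℝ) / 3 with hq0
  have step1 : ∀ w ∈ U, wd (fun v => (((u v).re ^ q0 : ℝ) : ℂ)) w
      = (q0 : ℂ) * ((((u w).re ^ (q0 - 1) : ℝ) : ℂ) * wd u w) := by
    intro w hw; rw [hchain q0 w hw]; ring
  have step2 : ∀ w ∈ U, wd (wd (fun v => (((u v).re ^ q0 : ℝ) : ℂ))) w
      = (q0 : ℂ) * (((q0 - 1 : ℝ) : ℂ) * ((((u w).re ^ (q0 - 1 - 1) : ℝ) : ℂ) * (wd u w * wd u w))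
          + (((u w).re ^ (q0 - 1) : ℝ) : ℂ) * wd (wd u) w) := by
    intro w hw
    have e : wd (fun v => (((u v).re ^ q0 : ℝ) : ℂ))
        =ᶠ[nhds w] (fun v => (q0 : ℂ) * ((((u v).re ^ (q0 - 1) : ℝ) : ℂ) * wd u v)) := by
      filter_upwards [hU.mem_nhds hw] with v hv using step1 v hv
    rw [wd_congr e, wd_const_mul _ ((hgd (q0 - 1) w hw).fun_mul (hdA1 w hw)),
      wd_mul (hgd (q0 - 1) w hw) (hdA1 w hw), hchain (q0 - 1) w hw]
    ring
  have step3 : wd (wd (wd (fun v => (((u v).re ^ q0 : ℝ) : ℂ)))) z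
      = (q0 : ℂ) * (((q0 - 1 : ℝ) : ℂ)
          * (((q0 - 1 - 1 : ℝ) : ℂ) * (((u z).re ^ (q0 - 1 - 1 - 1) : ℝ) : ℂ) * wd u z
              * (wd u z * wd u z)
            + (((u z).re ^ (q0 - 1 - 1) : ℝ) : ℂ)
              * (wd (wd u) z * wd u z + wd u z * wd (wd u) z))
        + (((q0 - 1 : ℝ) : ℂ) * (((u z).re ^ (q0 - 1 - 1) : ℝ) : ℂ) * wd u z * wd (wd u) z
            + (((u z).re ^ (q0 - 1) : ℝ) : ℂ) * wd (wd (wd u)) z)) := by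
    have e : wd (wd (fun v => (((u v).re ^ q0 : ℝ) : ℂ)))
        =ᶠ[nhds z] (fun v => (q0 : ℂ)
          * (((q0 - 1 : ℝ) : ℂ) * ((((u v).re ^ (q0 - 1 - 1) : ℝ) : ℂ) * (wd u v * wd u v))
            + (((u v).re ^ (q0 - 1) : ℝ) : ℂ) * wd (wd u) v)) := by
      filter_upwards [hU.mem_nhds hz] with v hv using step2 v hv
    have d1 : DifferentiableAt ℝ
        (fun v => (((u v).re ^ (q0 - 1 - 1) : ℝ) : ℂ) * (wd u v * wd u v)) z :=
      (hgd _ z hz).mul ((hdA1 z hz).mul (hdA1 z hz))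
    have d2 : DifferentiableAt ℝ
        (fun v => (((u v).re ^ (q0 - 1) : ℝ) : ℂ) * wd (wd u) v) z :=
      (hgd _ z hz).mul (hdA2 z hz)
    rw [wd_congr e, wd_const_mul _ ((d1.const_mul _).fun_add d2),
      wd_add (d1.const_mul _) d2,
      wd_const_mul _ d1,
      wd_mul (hgd (q0 - 1 - 1) z hz) ((hdA1 z hz).fun_mul (hdA1 z hz)),
      wd_mul (hdA1 z hz) (hdA1 z hz),
      wd_mul (hgd (q0 - 1) z hz) (hdA2 z hz),
      hchain (q0 - 1 - 1) z hz, hchain (q0 - 1) z hz]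
  rw [step3]
  have t0 : (0 : ℝ) < (u z).re := hpos z hz
  have e1 : (u z).re ^ (q0 - 1 - 1) = (u z).re ^ (q0 - 1 - 1 - 1) * (u z).re := by
    have h' : q0 - 1 - 1 = (q0 - 1 - 1 - 1) + 1 := by ring
    conv_lhs => rw [h']
    rw [Real.rpow_add_one t0.ne']
  have e2 : (u z).re ^ (q0 - 1) = (u z).re ^ (q0 - 1 - 1 - 1) * (u z).re * (u z).re := by
    have h' : q0 - 1 = ((q0 - 1 - 1 - 1) + 1) + 1 := by ring
    conv_lhs => rw [h']
    rw [Real.rpow_add_one t0.ne', Real.rpow_add_one t0.ne']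
  rw [hureal z hz]
  simp only [Complex.ofReal_re]
  rw [e1, e2, hq0]
  push_cast
  ring

/-- for `F` real with `F_{1 1̄} > 0`, the complex Monge equation w.r.t. `z₁`
holds iff `G = (F_{1 1̄})^{-2/3}` satisfies `G_{111} = 0`. -/
theorem stmt5 (U : Set ℂ) (hU : IsOpen U) (h0 : (0 : ℂ) ∈ U) (F : ℂ → ℝ)
    (hF : ContDiffOn ℝ (⊤ : ℕ∞) (fun z => (F z : ℂ)) U)
    (hpos : ∀ z ∈ U, 0 < (wdb (wd (fun w => (F w : ℂ))) z).re) :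
    (∀ z ∈ U,
      9 * wd (wd (wd (wdb (wd (fun w => (F w : ℂ)))))) z
          * (wdb (wd (fun w => (F w : ℂ))) z) ^ 2
        - 45 * wd (wd (wdb (wd (fun w => (F w : ℂ))))) z
          * wd (wdb (wd (fun w => (F w : ℂ)))) z * wdb (wd (fun w => (F w : ℂ))) z
        + 40 * (wd (wdb (wd (fun w => (F w : ℂ)))) z) ^ 3 = 0)
    ↔ (∀ z ∈ U,
        wd (wd (wd (fun w =>
          ((((wdb (wd (fun v => (F v : ℂ))) w).re) ^ (-(2 : ℝ) / 3) : ℝ) : ℂ)))) z = 0) := by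
  have hu : ContDiffOn ℝ (⊤ : ℕ∞) (wdb (wd (fun w => (F w : ℂ)))) U :=
    contDiffOn_wdb hU (contDiffOn_wd hU (hF.of_le (by simp)))
  have hureal : ∀ w ∈ U, wdb (wd (fun v => (F v : ℂ))) w
      = (((wdb (wd (fun v => (F v : ℂ))) w).re : ℝ) : ℂ) := fun w hw => real_wdb_wd hU hF hw
  constructor
  · intro h z hz
    rw [key' hU hu hureal hpos hz, h z hz, mul_zero]
  · intro h z hz
    have hk := key' hU hu hureal hpos hz
    rw [h z hz] at hk
    have hg : ((((wdb (wd (fun v => (F v : ℂ))) z).re ^ (-(2 : ℝ) / 3 - 1 - 1 - 1) : ℝ)) : ℂ) ≠ 0 := by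
      exact_mod_cast (Real.rpow_pos_of_pos (hpos z hz) _).ne'
    have hc : (-(2/27 : ℂ)) ≠ 0 := by norm_num
    exact (mul_eq_zero.1 hk.symm).resolve_left (mul_ne_zero hc hg)
end

section
/- Let $r$ be a smooth positive real-valued function of $(z_2,\bar z_2)$ near $0 \in \mathbb{C}$ and $s$ a smooth complex-valued function of $(z_1, z_2, \bar z_2)$, holomorphic in $z_1$, such that the pair $(r,s)$ satisfies the equation $r(r_{2\bar 2}|z_1|^2 + 2\mathrm{Re}\,s_{2\bar 2}) - |r_2|^2|z_1|^2 - |s_{1\bar 2}|^2 - r_2 s_{1\bar 2} z_1 - r_{\bar 2}\overline{s_{1\bar 2}}\bar z_1 = 0$ identically in $(z_1,z_2)$ near $0$. Then $s_{111\bar 2} = 0$ identically; consequently $s_{\bar 2}(z_1, z_2, \bar z_2)$ is a polynomial of degree at most $2$ in $z_1$ with coefficients smooth in $(z_2,\bar z_2)$. -/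
open Complex

/-- Partial Wirtinger derivative `∂/∂z₁` of `f : ℂ → ℂ → ℂ`. -/
noncomputable def wd1 (f : ℂ → ℂ → ℂ) (z1 z2 : ℂ) : ℂ := wd (fun w => f w z2) z1

/-- Partial Wirtinger derivative `∂/∂z̄₁` of `f : ℂ → ℂ → ℂ`. -/
noncomputable def wd1b (f : ℂ → ℂ → ℂ) (z1 z2 : ℂ) : ℂ := wdb (fun w => f w z2) z1

/-- Partial Wirtinger derivative `∂/∂z₂` of `f : ℂ → ℂ → ℂ`. -/
noncomputable def wd2 (f : ℂ → ℂ → ℂ) (z1 z2 : ℂ) : ℂ := wd (fun w => f z1 w) z2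

/-- Partial Wirtinger derivative `∂/∂z̄₂` of `f : ℂ → ℂ → ℂ`. -/
noncomputable def wd2b (f : ℂ → ℂ → ℂ) (z1 z2 : ℂ) : ℂ := wdb (fun w => f z1 w) z2

section aux

lemma wdb_congr {f g : ℂ → ℂ} {z : ℂ} (h : f =ᶠ[nhds z] g) : wdb f z = wdb g z := by
  unfold wdb; rw [h.fderiv_eq]

lemma wd_const (c z : ℂ) : wd (fun _ => c) z = 0 := by
  unfold wd; simp

lemma wdb_const (c z : ℂ) : wdb (fun _ => c) z = 0 := by
  unfold wdb; simp

lemma wd_id (z : ℂ) : wd (fun w => w) z = 1 := by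
  unfold wd
  rw [fderiv_id']
  simp only [ContinuousLinearMap.coe_id', id_eq]
  rw [Complex.I_mul_I]; ring

lemma wdb_id (z : ℂ) : wdb (fun w => w) z = 0 := by
  unfold wdb
  rw [fderiv_id']
  simp only [ContinuousLinearMap.coe_id', id_eq]
  rw [Complex.I_mul_I]; ring

lemma wdb_mul {f g : ℂ → ℂ} {z : ℂ} (hf : DifferentiableAt ℝ f z)
    (hg : DifferentiableAt ℝ g z) :
    wdb (fun w => f w * g w) z = wdb f z * g z + f z * wdb g z := by
  unfold wdb
  rw [fderiv_fun_mul hf hg]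
  simp only [ContinuousLinearMap.add_apply, ContinuousLinearMap.smul_apply, smul_eq_mul]
  ring

lemma wdb_add {f g : ℂ → ℂ} {z : ℂ} (hf : DifferentiableAt ℝ f z)
    (hg : DifferentiableAt ℝ g z) :
    wdb (fun w => f w + g w) z = wdb f z + wdb g z := by
  unfold wdb
  rw [fderiv_fun_add hf hg]
  simp only [ContinuousLinearMap.add_apply]
  ring

lemma wdb_const_mul {f : ℂ → ℂ} {z : ℂ} (c : ℂ) (hf : DifferentiableAt ℝ f z) :
    wdb (fun w => c * f w) z = c * wdb f z := by
  unfold wdb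
  rw [fderiv_const_mul hf c]
  simp only [ContinuousLinearMap.smul_apply, smul_eq_mul]
  ring

lemma differentiableAt_conj_comp {f : ℂ → ℂ} {z : ℂ} (hf : DifferentiableAt ℝ f z) :
    DifferentiableAt ℝ (fun w => starRingEnd ℂ (f w)) z := by
  have h : (fun w => starRingEnd ℂ (f w)) = (⇑Complex.conjCLE ∘ f) := by
    ext w; simp [Complex.conjCLE_apply]
  rw [h]
  exact Complex.conjCLE.differentiableAt.comp z hf

lemma fderiv_conj_comp {f : ℂ → ℂ} {z : ℂ} (hf : DifferentiableAt ℝ f z) (v : ℂ) :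
    fderiv ℝ (fun w => starRingEnd ℂ (f w)) z v = starRingEnd ℂ (fderiv ℝ f z v) := by
  have h : (fun w => starRingEnd ℂ (f w)) = (⇑Complex.conjCLE ∘ f) := by
    ext w; simp [Complex.conjCLE_apply]
  rw [h]
  rw [fderiv_comp z Complex.conjCLE.differentiableAt hf]
  simp only [ContinuousLinearMap.coe_comp', Function.comp_apply]
  rw [Complex.conjCLE.fderiv]
  simp [Complex.conjCLE_apply]

lemma wd_conj {f : ℂ → ℂ} {z : ℂ} (hf : DifferentiableAt ℝ f z) :
    wd (fun w => starRingEnd ℂ (f w)) z = starRingEnd ℂ (wdb f z) := by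
  unfold wd wdb
  rw [fderiv_conj_comp hf 1, fderiv_conj_comp hf Complex.I]
  simp only [map_mul, map_add, map_div₀, map_one, map_ofNat, Complex.conj_I]
  ring

lemma wdb_conj {f : ℂ → ℂ} {z : ℂ} (hf : DifferentiableAt ℝ f z) :
    wdb (fun w => starRingEnd ℂ (f w)) z = starRingEnd ℂ (wd f z) := by
  unfold wd wdb
  rw [fderiv_conj_comp hf 1, fderiv_conj_comp hf Complex.I]
  simp only [map_mul, map_add, map_sub, map_div₀, map_one, map_ofNat, Complex.conj_I]
  ring

lemma wd_conj_id (z : ℂ) : wd (fun w => starRingEnd ℂ w) z = 0 := by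
  have h := wd_conj (f := fun w => w) (z := z) differentiableAt_fun_id
  rw [h, wdb_id]; simp

lemma wdb_conj_id (z : ℂ) : wdb (fun w => starRingEnd ℂ w) z = 1 := by
  have h := wdb_conj (f := fun w => w) (z := z) differentiableAt_fun_id
  rw [h, wd_id]; simp

lemma wd_of_holo {f : ℂ → ℂ} {z : ℂ} (hf : DifferentiableAt ℂ f z) :
    wd f z = deriv f z := by
  unfold wd
  rw [hf.fderiv_restrictScalars ℝ]
  simp only [ContinuousLinearMap.coe_restrictScalars']
  have h2 : fderiv ℂ f z Complex.I = Complex.I * fderiv ℂ f z 1 := by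
    have := (fderiv ℂ f z).map_smul Complex.I (1 : ℂ)
    simpa [smul_eq_mul] using this
  rw [h2, ← fderiv_apply_one_eq_deriv, ← mul_assoc, Complex.I_mul_I]
  ring

lemma holo_of_wdb {f : ℂ → ℂ} {z : ℂ} (hf : DifferentiableAt ℝ f z)
    (h : wdb f z = 0) : DifferentiableAt ℂ f z := by
  set L := fderiv ℝ f z with hL
  have h2 : L 1 + Complex.I * L Complex.I = 0 := by
    have h3 : (1/2 : ℂ) * (L 1 + Complex.I * L Complex.I) = 0 := h
    have := mul_eq_zero.1 h3
    rcases this with h4 | h4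
    · norm_num at h4
    · exact h4
  have hI : L Complex.I = Complex.I * L 1 := by
    have h3 := congrArg (fun x => Complex.I * x) h2
    simp only [mul_add, ← mul_assoc, Complex.I_mul_I, mul_zero] at h3
    linear_combination -h3
  have key : ∀ w : ℂ, L w = w * L 1 := by
    intro w
    have hw : w = (w.re : ℝ) • (1 : ℂ) + (w.im : ℝ) • Complex.I := by
      simp [Complex.real_smul]
    calc L w = L ((w.re : ℝ) • (1 : ℂ) + (w.im : ℝ) • Complex.I) := by rw [← hw]
    _ = (w.re : ℝ) • L 1 + (w.im : ℝ) • L Complex.I := by rw [map_add, map_smul, map_smul]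
    _ = (w.re : ℂ) * L 1 + (w.im : ℂ) * (Complex.I * L 1) := by
          rw [hI, Complex.real_smul, Complex.real_smul]
    _ = w * L 1 := by conv_rhs => rw [← Complex.re_add_im w]
                      push_cast
                      ring
  have hM : HasFDerivAt f ((L 1) • (ContinuousLinearMap.id ℂ ℂ)) z := by
    apply hasFDerivAt_of_restrictScalars ℝ hf.hasFDerivAt
    ext w
    simp only [ContinuousLinearMap.coe_restrictScalars', ContinuousLinearMap.smul_apply,
      ContinuousLinearMap.coe_id', id_eq, smul_eq_mul]
    rw [key w]; ring
  exact hM.differentiableAt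

end aux

section pdsec

variable {U : Set (ℂ × ℂ)}

noncomputable def pdv (v : ℂ × ℂ) (f : ℂ × ℂ → ℂ) (p : ℂ × ℂ) : ℂ := fderiv ℝ f p v

lemma pdv_congr {v : ℂ × ℂ} {f g : ℂ × ℂ → ℂ} {p : ℂ × ℂ} (h : f =ᶠ[nhds p] g) :
    pdv v f p = pdv v g p := by
  unfold pdv; rw [h.fderiv_eq]

lemma cdOn_diffAt {E : Type*} [NormedAddCommGroup E] [NormedSpace ℝ E]
    {F : Type*} [NormedAddCommGroup F] [NormedSpace ℝ F] {V : Set E}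
    {f : E → F} (hV : IsOpen V) (hf : ContDiffOn ℝ (⊤ : ℕ∞) f V) {p : E} (hp : p ∈ V) :
    DifferentiableAt ℝ f p :=
  ((hf p hp).contDiffAt (hV.mem_nhds hp)).differentiableAt (by simp)

lemma pdv_contDiffOn (hU : IsOpen U) {f : ℂ × ℂ → ℂ} (hf : ContDiffOn ℝ (⊤ : ℕ∞) f U)
    (v : ℂ × ℂ) : ContDiffOn ℝ (⊤ : ℕ∞) (pdv v f) U := by
  have h1 : ContDiffOn ℝ (⊤ : ℕ∞) (fderiv ℝ f) U := hf.fderiv_of_isOpen hU (by simp)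
  exact (ContinuousLinearMap.apply ℝ ℂ v).contDiff.comp_contDiffOn h1

lemma pdv_pd (hU : IsOpen U) {f : ℂ × ℂ → ℂ} (hf : ContDiffOn ℝ (⊤ : ℕ∞) f U) {p : ℂ × ℂ}
    (hp : p ∈ U) (u v : ℂ × ℂ) :
    pdv u (pdv v f) p = fderiv ℝ (fderiv ℝ f) p u v := by
  unfold pdv
  have hdf : DifferentiableAt ℝ (fderiv ℝ f) p :=
    cdOn_diffAt hU (hf.fderiv_of_isOpen hU (by simp)) hp
  rw [fderiv_clm_apply hdf (differentiableAt_const v)]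
  simp

lemma pdv_comm (hU : IsOpen U) {f : ℂ × ℂ → ℂ} (hf : ContDiffOn ℝ (⊤ : ℕ∞) f U) {p : ℂ × ℂ}
    (hp : p ∈ U) (u v : ℂ × ℂ) :
    pdv u (pdv v f) p = pdv v (pdv u f) p := by
  rw [pdv_pd hU hf hp u v, pdv_pd hU hf hp v u]
  exact ((hf p hp).contDiffAt (hU.mem_nhds hp)).isSymmSndFDerivAt (by rw [minSmoothness_of_isRCLikeNormedField]; exact WithTop.coe_le_coe.2 le_top) u v

noncomputable def wop (c : ℂ) (a b : ℂ × ℂ) (f : ℂ × ℂ → ℂ) (p : ℂ × ℂ) : ℂ :=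
  (1/2 : ℂ) * (pdv a f p + c * pdv b f p)

lemma wop_def (c : ℂ) (a b : ℂ × ℂ) (f : ℂ × ℂ → ℂ) (p : ℂ × ℂ) :
    wop c a b f p = (1/2 : ℂ) * (pdv a f p + c * pdv b f p) := rfl

lemma wop_contDiffOn {c : ℂ} {a b : ℂ × ℂ} (hU : IsOpen U) {f : ℂ × ℂ → ℂ}
    (hf : ContDiffOn ℝ (⊤ : ℕ∞) f U) : ContDiffOn ℝ (⊤ : ℕ∞) (wop c a b f) U := by
  unfold wop
  exact contDiffOn_const.mul ((pdv_contDiffOn hU hf a).add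
    (contDiffOn_const.mul (pdv_contDiffOn hU hf b)))

lemma wop_congrU {c : ℂ} {a b : ℂ × ℂ} (hU : IsOpen U) {f g : ℂ × ℂ → ℂ}
    (h : ∀ q ∈ U, f q = g q) {p : ℂ × ℂ} (hp : p ∈ U) :
    wop c a b f p = wop c a b g p := by
  have h1 : f =ᶠ[nhds p] g := Filter.eventuallyEq_of_mem (hU.mem_nhds hp) h
  unfold wop
  rw [pdv_congr h1, pdv_congr h1]

lemma wop_zero {c : ℂ} {a b : ℂ × ℂ} (hU : IsOpen U) {f : ℂ × ℂ → ℂ}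
    (h : ∀ q ∈ U, f q = 0) {p : ℂ × ℂ} (hp : p ∈ U) :
    wop c a b f p = 0 := by
  rw [wop_congrU (g := fun _ => (0 : ℂ)) hU h hp]
  unfold wop pdv
  simp

lemma pdv_wop {c : ℂ} {a b : ℂ × ℂ} (hU : IsOpen U) {f : ℂ × ℂ → ℂ}
    (hf : ContDiffOn ℝ (⊤ : ℕ∞) f U) {p : ℂ × ℂ} (hp : p ∈ U) (v : ℂ × ℂ) :
    pdv v (wop c a b f) p = (1/2 : ℂ) * (pdv v (pdv a f) p + c * pdv v (pdv b f) p) := by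
  have ha : DifferentiableAt ℝ (pdv a f) p := cdOn_diffAt hU (pdv_contDiffOn hU hf a) hp
  have hb : DifferentiableAt ℝ (pdv b f) p := cdOn_diffAt hU (pdv_contDiffOn hU hf b) hp
  have H : HasFDerivAt (fun q => (1/2 : ℂ) * (pdv a f q + c * pdv b f q))
      ((1/2 : ℂ) • (fderiv ℝ (pdv a f) p + c • fderiv ℝ (pdv b f) p)) p :=
    (ha.hasFDerivAt.add (hb.hasFDerivAt.const_mul c)).const_mul (1/2 : ℂ)
  show fderiv ℝ (fun q => (1/2 : ℂ) * (pdv a f q + c * pdv b f q)) p v = _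
  rw [H.fderiv]
  simp only [ContinuousLinearMap.smul_apply, ContinuousLinearMap.add_apply, smul_eq_mul]
  rfl

lemma wop_comm {c c' : ℂ} {a b a' b' : ℂ × ℂ} (hU : IsOpen U) {f : ℂ × ℂ → ℂ}
    (hf : ContDiffOn ℝ (⊤ : ℕ∞) f U) {p : ℂ × ℂ} (hp : p ∈ U) :
    wop c a b (wop c' a' b' f) p = wop c' a' b' (wop c a b f) p := by
  rw [wop_def c a b, wop_def c' a' b']
  rw [pdv_wop hU hf hp a, pdv_wop hU hf hp b, pdv_wop hU hf hp a', pdv_wop hU hf hp b']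
  linear_combination (1/4 : ℂ) * (pdv_comm hU hf hp a a') + (c'/4) * (pdv_comm hU hf hp a b')
    + (c/4) * (pdv_comm hU hf hp b a') + (c*c'/4) * (pdv_comm hU hf hp b b')

noncomputable def w1 := wop (-Complex.I) (1, 0) (Complex.I, 0)
noncomputable def w1b := wop Complex.I (1, 0) (Complex.I, 0)
noncomputable def w2 := wop (-Complex.I) (0, 1) (0, Complex.I)
noncomputable def w2b := wop Complex.I (0, 1) (0, Complex.I)

lemma slice1_fderiv {f : ℂ × ℂ → ℂ} {p : ℂ × ℂ} (hf : DifferentiableAt ℝ f p) (v : ℂ) :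
    fderiv ℝ (fun w => f (w, p.2)) p.1 v = fderiv ℝ f p (v, 0) := by
  have hinner : HasFDerivAt (fun w : ℂ => (w, p.2))
      ((ContinuousLinearMap.id ℝ ℂ).prod (0 : ℂ →L[ℝ] ℂ)) p.1 :=
    (hasFDerivAt_id p.1).prodMk (hasFDerivAt_const p.2 p.1)
  have houter : HasFDerivAt f (fderiv ℝ f p) (p.1, p.2) := by
    rw [Prod.mk.eta]; exact hf.hasFDerivAt
  have hcomp := houter.comp p.1 hinner
  rw [show (fun w => f (w, p.2)) = (f ∘ fun w => (w, p.2)) from rfl, hcomp.fderiv]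
  simp

lemma slice2_fderiv {f : ℂ × ℂ → ℂ} {p : ℂ × ℂ} (hf : DifferentiableAt ℝ f p) (v : ℂ) :
    fderiv ℝ (fun w => f (p.1, w)) p.2 v = fderiv ℝ f p (0, v) := by
  have hinner : HasFDerivAt (fun w : ℂ => (p.1, w))
      ((0 : ℂ →L[ℝ] ℂ).prod (ContinuousLinearMap.id ℝ ℂ)) p.2 :=
    (hasFDerivAt_const p.1 p.2).prodMk (hasFDerivAt_id p.2)
  have houter : HasFDerivAt f (fderiv ℝ f p) (p.1, p.2) := by
    rw [Prod.mk.eta]; exact hf.hasFDerivAt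
  have hcomp := houter.comp p.2 hinner
  rw [show (fun w => f (p.1, w)) = (f ∘ fun w => (p.1, w)) from rfl, hcomp.fderiv]
  simp

lemma slice1_diffAt (hU : IsOpen U) {Φ : ℂ × ℂ → ℂ} (hΦ : ContDiffOn ℝ (⊤ : ℕ∞) Φ U)
    {z z2 : ℂ} (hp : (z, z2) ∈ U) : DifferentiableAt ℝ (fun w => Φ (w, z2)) z :=
  (cdOn_diffAt hU hΦ hp).comp z (differentiableAt_id.prodMk (differentiableAt_const z2))

lemma wd_slice (hU : IsOpen U) {Φ : ℂ × ℂ → ℂ} (hΦ : ContDiffOn ℝ (⊤ : ℕ∞) Φ U)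
    {z z2 : ℂ} (hp : (z, z2) ∈ U) :
    wd (fun w => Φ (w, z2)) z = w1 Φ (z, z2) := by
  have hd : DifferentiableAt ℝ Φ (z, z2) := cdOn_diffAt hU hΦ hp
  unfold wd
  rw [slice1_fderiv (p := (z, z2)) hd 1, slice1_fderiv (p := (z, z2)) hd Complex.I]
  simp only [w1, wop, pdv]
  try ring

lemma wdb_slice (hU : IsOpen U) {Φ : ℂ × ℂ → ℂ} (hΦ : ContDiffOn ℝ (⊤ : ℕ∞) Φ U)
    {z z2 : ℂ} (hp : (z, z2) ∈ U) :
    wdb (fun w => Φ (w, z2)) z = w1b Φ (z, z2) := by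
  have hd : DifferentiableAt ℝ Φ (z, z2) := cdOn_diffAt hU hΦ hp
  unfold wdb
  rw [slice1_fderiv (p := (z, z2)) hd 1, slice1_fderiv (p := (z, z2)) hd Complex.I]
  simp only [w1b, wop, pdv]
  try ring

lemma wd_slice2 (hU : IsOpen U) {Φ : ℂ × ℂ → ℂ} (hΦ : ContDiffOn ℝ (⊤ : ℕ∞) Φ U)
    {z1 z : ℂ} (hp : (z1, z) ∈ U) :
    wd (fun w => Φ (z1, w)) z = w2 Φ (z1, z) := by
  have hd : DifferentiableAt ℝ Φ (z1, z) := cdOn_diffAt hU hΦ hp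
  unfold wd
  rw [slice2_fderiv (p := (z1, z)) hd 1, slice2_fderiv (p := (z1, z)) hd Complex.I]
  simp only [w2, wop, pdv]
  try ring

lemma wdb_slice2 (hU : IsOpen U) {Φ : ℂ × ℂ → ℂ} (hΦ : ContDiffOn ℝ (⊤ : ℕ∞) Φ U)
    {z1 z : ℂ} (hp : (z1, z) ∈ U) :
    wdb (fun w => Φ (z1, w)) z = w2b Φ (z1, z) := by
  have hd : DifferentiableAt ℝ Φ (z1, z) := cdOn_diffAt hU hΦ hp
  unfold wdb
  rw [slice2_fderiv (p := (z1, z)) hd 1, slice2_fderiv (p := (z1, z)) hd Complex.I]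
  simp only [w2b, wop, pdv]
  try ring

end pdsec

section transport

variable {U : Set (ℂ × ℂ)}

lemma wd_comb7 {f1 f2 f3 f4 f5 f6 f7 : ℂ → ℂ} {z : ℂ}
    (h1 : DifferentiableAt ℝ f1 z) (h2 : DifferentiableAt ℝ f2 z) (h3 : DifferentiableAt ℝ f3 z)
    (h4 : DifferentiableAt ℝ f4 z) (h5 : DifferentiableAt ℝ f5 z) (h6 : DifferentiableAt ℝ f6 z)
    (h7 : DifferentiableAt ℝ f7 z) :
    wd (fun w => f1 w + f2 w + f3 w - f4 w - f5 w - f6 w - f7 w) z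
      = wd f1 z + wd f2 z + wd f3 z - wd f4 z - wd f5 z - wd f6 z - wd f7 z := by
  have H : HasFDerivAt (fun w => f1 w + f2 w + f3 w - f4 w - f5 w - f6 w - f7 w)
      (fderiv ℝ f1 z + fderiv ℝ f2 z + fderiv ℝ f3 z - fderiv ℝ f4 z - fderiv ℝ f5 z
        - fderiv ℝ f6 z - fderiv ℝ f7 z) z :=
    (((((h1.hasFDerivAt.add h2.hasFDerivAt).add h3.hasFDerivAt).sub h4.hasFDerivAt).sub
      h5.hasFDerivAt).sub h6.hasFDerivAt).sub h7.hasFDerivAt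
  unfold wd
  rw [H.fderiv]
  simp only [ContinuousLinearMap.add_apply, ContinuousLinearMap.sub_apply]
  ring

lemma wdb_comb5 {f1 f2 f3 f4 f5 : ℂ → ℂ} {z : ℂ}
    (h1 : DifferentiableAt ℝ f1 z) (h2 : DifferentiableAt ℝ f2 z) (h3 : DifferentiableAt ℝ f3 z)
    (h4 : DifferentiableAt ℝ f4 z) (h5 : DifferentiableAt ℝ f5 z) :
    wdb (fun w => f1 w + f2 w - f3 w - f4 w - f5 w) z
      = wdb f1 z + wdb f2 z - wdb f3 z - wdb f4 z - wdb f5 z := by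
  have H : HasFDerivAt (fun w => f1 w + f2 w - f3 w - f4 w - f5 w)
      (fderiv ℝ f1 z + fderiv ℝ f2 z - fderiv ℝ f3 z - fderiv ℝ f4 z - fderiv ℝ f5 z) z :=
    (((h1.hasFDerivAt.add h2.hasFDerivAt).sub h3.hasFDerivAt).sub h4.hasFDerivAt).sub
      h5.hasFDerivAt
  unfold wdb
  rw [H.fderiv]
  simp only [ContinuousLinearMap.add_apply, ContinuousLinearMap.sub_apply]
  ring

lemma wd1_sliceT (hU : IsOpen U) {F : ℂ → ℂ → ℂ} {Φ : ℂ × ℂ → ℂ} (hΦ : ContDiffOn ℝ (⊤ : ℕ∞) Φ U)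
    (hF : ∀ q ∈ U, F q.1 q.2 = Φ q) {q : ℂ × ℂ} (hq : q ∈ U) :
    wd1 F q.1 q.2 = w1 Φ q := by
  obtain ⟨z1, z2⟩ := q
  have hev : (fun w => F w z2) =ᶠ[nhds z1] (fun w => Φ (w, z2)) := by
    have hV : IsOpen {w : ℂ | (w, z2) ∈ U} := hU.preimage (continuous_id.prodMk continuous_const)
    have hmem : z1 ∈ {w : ℂ | (w, z2) ∈ U} := hq
    filter_upwards [hV.mem_nhds hmem] with w hw
    exact hF (w, z2) hw
  show wd1 F z1 z2 = w1 Φ (z1, z2)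
  unfold wd1
  rw [wd_congr hev]
  exact wd_slice hU hΦ hq

lemma wd1b_sliceT (hU : IsOpen U) {F : ℂ → ℂ → ℂ} {Φ : ℂ × ℂ → ℂ} (hΦ : ContDiffOn ℝ (⊤ : ℕ∞) Φ U)
    (hF : ∀ q ∈ U, F q.1 q.2 = Φ q) {q : ℂ × ℂ} (hq : q ∈ U) :
    wd1b F q.1 q.2 = w1b Φ q := by
  obtain ⟨z1, z2⟩ := q
  have hev : (fun w => F w z2) =ᶠ[nhds z1] (fun w => Φ (w, z2)) := by
    have hV : IsOpen {w : ℂ | (w, z2) ∈ U} := hU.preimage (continuous_id.prodMk continuous_const)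
    have hmem : z1 ∈ {w : ℂ | (w, z2) ∈ U} := hq
    filter_upwards [hV.mem_nhds hmem] with w hw
    exact hF (w, z2) hw
  show wd1b F z1 z2 = w1b Φ (z1, z2)
  unfold wd1b
  rw [wdb_congr hev]
  exact wdb_slice hU hΦ hq

lemma wd2_sliceT (hU : IsOpen U) {F : ℂ → ℂ → ℂ} {Φ : ℂ × ℂ → ℂ} (hΦ : ContDiffOn ℝ (⊤ : ℕ∞) Φ U)
    (hF : ∀ q ∈ U, F q.1 q.2 = Φ q) {q : ℂ × ℂ} (hq : q ∈ U) :
    wd2 F q.1 q.2 = w2 Φ q := by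
  obtain ⟨z1, z2⟩ := q
  have hev : (fun w => F z1 w) =ᶠ[nhds z2] (fun w => Φ (z1, w)) := by
    have hV : IsOpen {w : ℂ | (z1, w) ∈ U} := hU.preimage (continuous_const.prodMk continuous_id)
    have hmem : z2 ∈ {w : ℂ | (z1, w) ∈ U} := hq
    filter_upwards [hV.mem_nhds hmem] with w hw
    exact hF (z1, w) hw
  show wd2 F z1 z2 = w2 Φ (z1, z2)
  unfold wd2
  rw [wd_congr hev]
  exact wd_slice2 hU hΦ hq

lemma wd2b_sliceT (hU : IsOpen U) {F : ℂ → ℂ → ℂ} {Φ : ℂ × ℂ → ℂ} (hΦ : ContDiffOn ℝ (⊤ : ℕ∞) Φ U)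
    (hF : ∀ q ∈ U, F q.1 q.2 = Φ q) {q : ℂ × ℂ} (hq : q ∈ U) :
    wd2b F q.1 q.2 = w2b Φ q := by
  obtain ⟨z1, z2⟩ := q
  have hev : (fun w => F z1 w) =ᶠ[nhds z2] (fun w => Φ (z1, w)) := by
    have hV : IsOpen {w : ℂ | (z1, w) ∈ U} := hU.preimage (continuous_const.prodMk continuous_id)
    have hmem : z2 ∈ {w : ℂ | (z1, w) ∈ U} := hq
    filter_upwards [hV.mem_nhds hmem] with w hw
    exact hF (z1, w) hw
  show wd2b F z1 z2 = w2b Φ (z1, z2)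
  unfold wd2b
  rw [wdb_congr hev]
  exact wdb_slice2 hU hΦ hq

lemma const_of_deriv_zero {ε : ℝ} (hε : 0 < ε) (h : ℂ → ℂ)
    (hdiff : ∀ z ∈ Metric.ball (0:ℂ) ε, DifferentiableAt ℂ h z)
    (hderiv : ∀ z ∈ Metric.ball (0:ℂ) ε, deriv h z = 0) :
    ∀ z ∈ Metric.ball (0:ℂ) ε, h z = h 0 := by
  intro z hz
  refine (convex_ball (0:ℂ) ε).is_const_of_fderivWithin_eq_zero (𝕜 := ℂ)
    (fun x hx => (hdiff x hx).differentiableWithinAt) ?_ hz (Metric.mem_ball_self hε)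
  intro x hx
  rw [fderivWithin_of_isOpen Metric.isOpen_ball hx]
  refine ContinuousLinearMap.ext fun w => ?_
  have h1 : fderiv ℂ h x w = w * fderiv ℂ h x 1 := by
    have := (fderiv ℂ h x).map_smul w (1 : ℂ)
    simpa using this
  rw [ContinuousLinearMap.zero_apply, h1, fderiv_apply_one_eq_deriv, hderiv x hx, mul_zero]

end transport

set_option maxHeartbeats 4000000 in
/-- the Monge–Ampère identity for `F = r|z₁|² + s + s̄` forces
`s_{111 2̄} = 0`, hence `s_{2̄}` is a polynomial of degree ≤ 2 in `z₁`. -/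
theorem stmt9 (ε : ℝ) (hε : 0 < ε)
    (r : ℂ → ℝ) (s : ℂ → ℂ → ℂ)
    (hr : ContDiffOn ℝ (⊤ : ℕ∞) (fun z => (r z : ℂ)) (Metric.ball (0 : ℂ) ε))
    (hpos : ∀ z ∈ Metric.ball (0 : ℂ) ε, 0 < r z)
    (hs : ContDiffOn ℝ (⊤ : ℕ∞) (fun p : ℂ × ℂ => s p.1 p.2)
      (Metric.ball (0 : ℂ) ε ×ˢ Metric.ball (0 : ℂ) ε))
    (hhol : ∀ z1 ∈ Metric.ball (0 : ℂ) ε, ∀ z2 ∈ Metric.ball (0 : ℂ) ε,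
      wd1b s z1 z2 = 0)
    (heq : ∀ z1 ∈ Metric.ball (0 : ℂ) ε, ∀ z2 ∈ Metric.ball (0 : ℂ) ε,
      (r z2 : ℂ) * (wdb (wd (fun w => (r w : ℂ))) z2 * (Complex.normSq z1 : ℂ)
            + wd2b (wd2 s) z1 z2 + starRingEnd ℂ (wd2b (wd2 s) z1 z2))
        - (Complex.normSq (wd (fun w => (r w : ℂ)) z2) : ℂ) * (Complex.normSq z1 : ℂ)
        - (Complex.normSq (wd2b (wd1 s) z1 z2) : ℂ)
        - wd (fun w => (r w : ℂ)) z2 * wd2b (wd1 s) z1 z2 * z1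
        - starRingEnd ℂ (wd (fun w => (r w : ℂ)) z2)
            * starRingEnd ℂ (wd2b (wd1 s) z1 z2) * starRingEnd ℂ z1 = 0) :
    (∀ z1 ∈ Metric.ball (0 : ℂ) ε, ∀ z2 ∈ Metric.ball (0 : ℂ) ε,
      wd2b (wd1 (wd1 (wd1 s))) z1 z2 = 0) ∧
    ∃ t0 u0 v0 : ℂ → ℂ,
      ContDiffOn ℝ (⊤ : ℕ∞) t0 (Metric.ball (0 : ℂ) ε) ∧
      ContDiffOn ℝ (⊤ : ℕ∞) u0 (Metric.ball (0 : ℂ) ε) ∧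
      ContDiffOn ℝ (⊤ : ℕ∞) v0 (Metric.ball (0 : ℂ) ε) ∧
      ∀ z1 ∈ Metric.ball (0 : ℂ) ε, ∀ z2 ∈ Metric.ball (0 : ℂ) ε,
        wd2b s z1 z2 = t0 z2 * z1 ^ 2 + u0 z2 * z1 + v0 z2 := by
  obtain ⟨f, hfdef⟩ : ∃ f : ℂ × ℂ → ℂ, f = fun p : ℂ × ℂ => s p.1 p.2 := ⟨_, rfl⟩
  have hU : IsOpen (Metric.ball (0 : ℂ) ε ×ˢ Metric.ball (0 : ℂ) ε) :=
    Metric.isOpen_ball.prod Metric.isOpen_ball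
  have hf : ContDiffOn ℝ (⊤ : ℕ∞) f (Metric.ball (0 : ℂ) ε ×ˢ Metric.ball (0 : ℂ) ε) := by
    rw [hfdef]; exact hs
  have hfr : ∀ q ∈ Metric.ball (0 : ℂ) ε ×ˢ Metric.ball (0 : ℂ) ε, s q.1 q.2 = f q := by
    intro q _; rw [hfdef]
  have hball0 : (0 : ℂ) ∈ Metric.ball (0 : ℂ) ε := Metric.mem_ball_self hε
  -- smoothness of iterated operators
  have cd_w1f : ContDiffOn ℝ (⊤ : ℕ∞) (w1 f) (Metric.ball (0 : ℂ) ε ×ˢ Metric.ball (0 : ℂ) ε) :=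
    wop_contDiffOn hU hf
  have cd_w2f : ContDiffOn ℝ (⊤ : ℕ∞) (w2 f) (Metric.ball (0 : ℂ) ε ×ˢ Metric.ball (0 : ℂ) ε) :=
    wop_contDiffOn hU hf
  have cd_w2bf : ContDiffOn ℝ (⊤ : ℕ∞) (w2b f) (Metric.ball (0 : ℂ) ε ×ˢ Metric.ball (0 : ℂ) ε) :=
    wop_contDiffOn hU hf
  have cd_g : ContDiffOn ℝ (⊤ : ℕ∞) (w2b (w1 f)) (Metric.ball (0 : ℂ) ε ×ˢ Metric.ball (0 : ℂ) ε) :=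
    wop_contDiffOn hU cd_w1f
  have cd_B : ContDiffOn ℝ (⊤ : ℕ∞) (w2b (w2 f)) (Metric.ball (0 : ℂ) ε ×ˢ Metric.ball (0 : ℂ) ε) :=
    wop_contDiffOn hU cd_w2f
  have cd_DG : ContDiffOn ℝ (⊤ : ℕ∞) (w1 (w2b (w1 f)))
      (Metric.ball (0 : ℂ) ε ×ˢ Metric.ball (0 : ℂ) ε) := wop_contDiffOn hU cd_g
  have cd_DB : ContDiffOn ℝ (⊤ : ℕ∞) (w1 (w2b (w2 f)))
      (Metric.ball (0 : ℂ) ε ×ˢ Metric.ball (0 : ℂ) ε) := wop_contDiffOn hU cd_B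
  -- transports
  have T1q : ∀ q ∈ Metric.ball (0 : ℂ) ε ×ˢ Metric.ball (0 : ℂ) ε,
      wd1 s q.1 q.2 = w1 f q := fun q hq => wd1_sliceT hU hf hfr hq
  have T2q : ∀ q ∈ Metric.ball (0 : ℂ) ε ×ˢ Metric.ball (0 : ℂ) ε,
      wd2 s q.1 q.2 = w2 f q := fun q hq => wd2_sliceT hU hf hfr hq
  -- the antiholomorphic derivative of f in the first variable vanishes
  have hw1bf : ∀ q ∈ Metric.ball (0 : ℂ) ε ×ˢ Metric.ball (0 : ℂ) ε, w1b f q = 0 := by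
    intro q hq
    have h2 : wd1b s q.1 q.2 = w1b f q := wd1b_sliceT hU hf hfr hq
    rw [← h2]
    exact hhol q.1 hq.1 q.2 hq.2
  -- vanishing of operators containing a w1b
  have Zphi : ∀ q ∈ Metric.ball (0 : ℂ) ε ×ˢ Metric.ball (0 : ℂ) ε, w1b (w2b f) q = 0 := by
    intro q hq
    have h1 : w1b (w2b f) q = w2b (w1b f) q := wop_comm hU hf hq
    rw [h1]
    exact wop_zero hU hw1bf hq
  have Zg : ∀ q ∈ Metric.ball (0 : ℂ) ε ×ˢ Metric.ball (0 : ℂ) ε,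
      w1b (w2b (w1 f)) q = 0 := by
    intro q hq
    have h1 : w1b (w2b (w1 f)) q = w2b (w1b (w1 f)) q := wop_comm hU cd_w1f hq
    have h2 : w2b (w1b (w1 f)) q = w2b (w1 (w1b f)) q := by
      refine wop_congrU hU (fun q' hq' => ?_) hq
      exact wop_comm hU hf hq'
    rw [h1, h2]
    refine wop_zero hU (fun q' hq' => ?_) hq
    exact wop_zero hU hw1bf hq'
  have ZB : ∀ q ∈ Metric.ball (0 : ℂ) ε ×ˢ Metric.ball (0 : ℂ) ε,
      w1b (w2b (w2 f)) q = 0 := by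
    intro q hq
    have h1 : w1b (w2b (w2 f)) q = w2b (w1b (w2 f)) q := wop_comm hU cd_w2f hq
    have h2 : w2b (w1b (w2 f)) q = w2b (w2 (w1b f)) q := by
      refine wop_congrU hU (fun q' hq' => ?_) hq
      exact wop_comm hU hf hq'
    rw [h1, h2]
    refine wop_zero hU (fun q' hq' => ?_) hq
    exact wop_zero hU hw1bf hq'
  have ZDG : ∀ q ∈ Metric.ball (0 : ℂ) ε ×ˢ Metric.ball (0 : ℂ) ε,
      w1b (w1 (w2b (w1 f))) q = 0 := by
    intro q hq
    have h1 : w1b (w1 (w2b (w1 f))) q = w1 (w1b (w2b (w1 f))) q := wop_comm hU cd_g hq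
    rw [h1]
    exact wop_zero hU Zg hq
  have ZDB : ∀ q ∈ Metric.ball (0 : ℂ) ε ×ˢ Metric.ball (0 : ℂ) ε,
      w1b (w1 (w2b (w2 f))) q = 0 := by
    intro q hq
    have h1 : w1b (w1 (w2b (w2 f))) q = w1 (w1b (w2b (w2 f))) q := wop_comm hU cd_B hq
    rw [h1]
    exact wop_zero hU ZB hq
  -- ===================== the per-z2 analysis =====================
  have MAIN : ∀ z2 ∈ Metric.ball (0 : ℂ) ε,
      (∀ z ∈ Metric.ball (0 : ℂ) ε, w1 (w1 (w2b (w1 f))) (z, z2) = 0) ∧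
      (∀ z ∈ Metric.ball (0 : ℂ) ε, w2b f (z, z2)
          = (1/2 : ℂ) * w1 (w1 (w2b f)) ((0 : ℂ), z2) * z ^ 2
            + w1 (w2b f) ((0 : ℂ), z2) * z + w2b f ((0 : ℂ), z2)) := by
    intro z2 m2
    have pmem : ∀ z : ℂ, z ∈ Metric.ball (0 : ℂ) ε →
        (z, z2) ∈ Metric.ball (0 : ℂ) ε ×ˢ Metric.ball (0 : ℂ) ε :=
      fun z hz => Set.mk_mem_prod hz m2
    set R : ℂ := ((r z2 : ℝ) : ℂ) with hRdef
    set A : ℂ := wdb (wd (fun w => ((r w : ℝ) : ℂ))) z2 with hAdef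
    set a : ℂ := wd (fun w => ((r w : ℝ) : ℂ)) z2 with hadef
    set g1 : ℂ → ℂ := fun z => w2b (w1 f) (z, z2) with hg1def
    set B1 : ℂ → ℂ := fun z => w2b (w2 f) (z, z2) with hB1def
    set DG : ℂ → ℂ := fun z => w1 (w2b (w1 f)) (z, z2) with hDGdef
    set DB : ℂ → ℂ := fun z => w1 (w2b (w2 f)) (z, z2) with hDBdef
    -- differentiability and derivative facts for the slices
    have hg1d : ∀ z ∈ Metric.ball (0 : ℂ) ε, DifferentiableAt ℝ g1 z := by
      intro z hz; rw [hg1def]; exact slice1_diffAt hU cd_g (pmem z hz)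
    have hB1d : ∀ z ∈ Metric.ball (0 : ℂ) ε, DifferentiableAt ℝ B1 z := by
      intro z hz; rw [hB1def]; exact slice1_diffAt hU cd_B (pmem z hz)
    have hDGd : ∀ z ∈ Metric.ball (0 : ℂ) ε, DifferentiableAt ℝ DG z := by
      intro z hz; rw [hDGdef]; exact slice1_diffAt hU cd_DG (pmem z hz)
    have hDBd : ∀ z ∈ Metric.ball (0 : ℂ) ε, DifferentiableAt ℝ DB z := by
      intro z hz; rw [hDBdef]; exact slice1_diffAt hU cd_DB (pmem z hz)
    have hwd_g1 : ∀ z ∈ Metric.ball (0 : ℂ) ε, wd g1 z = DG z := by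
      intro z hz; rw [hg1def, hDGdef]; exact wd_slice hU cd_g (pmem z hz)
    have hwd_B1 : ∀ z ∈ Metric.ball (0 : ℂ) ε, wd B1 z = DB z := by
      intro z hz; rw [hB1def, hDBdef]; exact wd_slice hU cd_B (pmem z hz)
    have hwdb_g1 : ∀ z ∈ Metric.ball (0 : ℂ) ε, wdb g1 z = 0 := by
      intro z hz; rw [hg1def]
      rw [wdb_slice hU cd_g (pmem z hz)]
      exact Zg _ (pmem z hz)
    have hwdb_B1 : ∀ z ∈ Metric.ball (0 : ℂ) ε, wdb B1 z = 0 := by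
      intro z hz; rw [hB1def]
      rw [wdb_slice hU cd_B (pmem z hz)]
      exact ZB _ (pmem z hz)
    have hwdb_DG : ∀ z ∈ Metric.ball (0 : ℂ) ε, wdb DG z = 0 := by
      intro z hz; rw [hDGdef]
      rw [wdb_slice hU cd_DG (pmem z hz)]
      exact ZDG _ (pmem z hz)
    have hwdb_DB : ∀ z ∈ Metric.ball (0 : ℂ) ε, wdb DB z = 0 := by
      intro z hz; rw [hDBdef]
      rw [wdb_slice hU cd_DB (pmem z hz)]
      exact ZDB _ (pmem z hz)
    have hwd_DG : ∀ z ∈ Metric.ball (0 : ℂ) ε, wd DG z = w1 (w1 (w2b (w1 f))) (z, z2) := by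
      intro z hz; rw [hDGdef]; exact wd_slice hU cd_DG (pmem z hz)
    -- transport of the second-order terms in the Monge-Ampère equation
    have hg1T : ∀ z ∈ Metric.ball (0 : ℂ) ε, wd2b (wd1 s) z z2 = g1 z := by
      intro z hz
      have h1 := wd2b_sliceT hU cd_w1f T1q (pmem z hz)
      rw [hg1def]; exact h1
    have hB1T : ∀ z ∈ Metric.ball (0 : ℂ) ε, wd2b (wd2 s) z z2 = B1 z := by
      intro z hz
      have h1 := wd2b_sliceT hU cd_w2f T2q (pmem z hz)
      rw [hB1def]; exact h1
    -- the equation, rewritten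
    have hΦ0 : ∀ x ∈ Metric.ball (0 : ℂ) ε,
        R * (A * (x * starRingEnd ℂ x)) + R * B1 x + R * starRingEnd ℂ (B1 x)
          - a * starRingEnd ℂ a * (x * starRingEnd ℂ x) - g1 x * starRingEnd ℂ (g1 x)
          - a * g1 x * x - starRingEnd ℂ a * starRingEnd ℂ (g1 x) * starRingEnd ℂ x = 0 := by
      intro x hx
      have h0 := heq x hx z2 m2
      rw [hB1T x hx, hg1T x hx] at h0
      rw [← hRdef, ← hAdef, ← hadef] at h0
      simp only [← Complex.mul_conj] at h0
      linear_combination h0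
    -- first Wirtinger derivative of the equation
    have E1 : ∀ z ∈ Metric.ball (0 : ℂ) ε,
        wd (fun w => R * (A * (w * starRingEnd ℂ w)) + R * B1 w + R * starRingEnd ℂ (B1 w)
          - a * starRingEnd ℂ a * (w * starRingEnd ℂ w) - g1 w * starRingEnd ℂ (g1 w)
          - a * g1 w * w - starRingEnd ℂ a * starRingEnd ℂ (g1 w) * starRingEnd ℂ w) z
        = R * (A * starRingEnd ℂ z) + R * DB z - a * starRingEnd ℂ a * starRingEnd ℂ z
          - DG z * starRingEnd ℂ (g1 z) - (a * DG z * z + a * g1 z) := by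
      intro z hz
      have dconj : DifferentiableAt ℝ (fun w : ℂ => starRingEnd ℂ w) z :=
        differentiableAt_conj_comp differentiableAt_fun_id
      have dzzb : DifferentiableAt ℝ (fun w : ℂ => w * starRingEnd ℂ w) z :=
        differentiableAt_fun_id.mul dconj
      have dg1 := hg1d z hz
      have dB1 := hB1d z hz
      have dcg1 : DifferentiableAt ℝ (fun w => starRingEnd ℂ (g1 w)) z :=
        differentiableAt_conj_comp dg1
      have dcB1 : DifferentiableAt ℝ (fun w => starRingEnd ℂ (B1 w)) z :=
        differentiableAt_conj_comp dB1
      have hzzb : wd (fun w : ℂ => w * starRingEnd ℂ w) z = starRingEnd ℂ z := by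
        rw [wd_mul differentiableAt_fun_id dconj, wd_id, wd_conj_id]; ring
      have D1 : DifferentiableAt ℝ (fun w : ℂ => R * (A * (w * starRingEnd ℂ w))) z :=
        (dzzb.const_mul A).const_mul R
      have D2 : DifferentiableAt ℝ (fun w => R * B1 w) z := dB1.const_mul R
      have D3 : DifferentiableAt ℝ (fun w => R * starRingEnd ℂ (B1 w)) z := dcB1.const_mul R
      have D4 : DifferentiableAt ℝ (fun w : ℂ => a * starRingEnd ℂ a * (w * starRingEnd ℂ w)) z :=
        dzzb.const_mul _
      have D5 : DifferentiableAt ℝ (fun w => g1 w * starRingEnd ℂ (g1 w)) z := dg1.mul dcg1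
      have D6 : DifferentiableAt ℝ (fun w => a * g1 w * w) z :=
        (dg1.const_mul a).mul differentiableAt_fun_id
      have D7 : DifferentiableAt ℝ
          (fun w => starRingEnd ℂ a * starRingEnd ℂ (g1 w) * starRingEnd ℂ w) z :=
        (dcg1.const_mul _).mul dconj
      have t1 : wd (fun w : ℂ => R * (A * (w * starRingEnd ℂ w))) z
          = R * (A * starRingEnd ℂ z) := by
        rw [wd_const_mul R (dzzb.const_mul A), wd_const_mul A dzzb, hzzb]
      have t2 : wd (fun w => R * B1 w) z = R * DB z := by
        rw [wd_const_mul R dB1, hwd_B1 z hz]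
      have t3 : wd (fun w => R * starRingEnd ℂ (B1 w)) z = 0 := by
        rw [wd_const_mul R dcB1, wd_conj dB1, hwdb_B1 z hz]
        simp
      have t4 : wd (fun w : ℂ => a * starRingEnd ℂ a * (w * starRingEnd ℂ w)) z
          = a * starRingEnd ℂ a * starRingEnd ℂ z := by
        rw [wd_const_mul _ dzzb, hzzb]
      have t5 : wd (fun w => g1 w * starRingEnd ℂ (g1 w)) z
          = DG z * starRingEnd ℂ (g1 z) := by
        rw [wd_mul dg1 dcg1, wd_conj dg1, hwdb_g1 z hz, hwd_g1 z hz]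
        simp
      have t6 : wd (fun w => a * g1 w * w) z = a * DG z * z + a * g1 z := by
        rw [wd_mul (dg1.const_mul a) differentiableAt_fun_id, wd_const_mul a dg1, wd_id,
          hwd_g1 z hz]
        ring
      have t7 : wd (fun w => starRingEnd ℂ a * starRingEnd ℂ (g1 w) * starRingEnd ℂ w) z
          = 0 := by
        rw [wd_mul (dcg1.const_mul _) dconj, wd_const_mul _ dcg1, wd_conj dg1, hwdb_g1 z hz,
          wd_conj_id]
        simp
      rw [wd_comb7 D1 D2 D3 D4 D5 D6 D7, t1, t2, t3, t4, t5, t6, t7]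
      ring
    have hΨ0 : ∀ x ∈ Metric.ball (0 : ℂ) ε,
        R * (A * starRingEnd ℂ x) + R * DB x - a * starRingEnd ℂ a * starRingEnd ℂ x
          - DG x * starRingEnd ℂ (g1 x) - (a * DG x * x + a * g1 x) = 0 := by
      intro x hx
      have hev : (fun w => R * (A * (w * starRingEnd ℂ w)) + R * B1 w
            + R * starRingEnd ℂ (B1 w) - a * starRingEnd ℂ a * (w * starRingEnd ℂ w)
            - g1 w * starRingEnd ℂ (g1 w) - a * g1 w * w
            - starRingEnd ℂ a * starRingEnd ℂ (g1 w) * starRingEnd ℂ w)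
          =ᶠ[nhds x] (fun _ => (0 : ℂ)) :=
        Filter.eventuallyEq_of_mem (Metric.isOpen_ball.mem_nhds hx) (fun y hy => hΦ0 y hy)
      have h1 : wd (fun w => R * (A * (w * starRingEnd ℂ w)) + R * B1 w
            + R * starRingEnd ℂ (B1 w) - a * starRingEnd ℂ a * (w * starRingEnd ℂ w)
            - g1 w * starRingEnd ℂ (g1 w) - a * g1 w * w
            - starRingEnd ℂ a * starRingEnd ℂ (g1 w) * starRingEnd ℂ w) x = 0 := by
        rw [wd_congr hev]; exact wd_const 0 x
      exact (E1 x hx).symm.trans h1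
    -- second Wirtinger derivative: the key pointwise identity
    have S2 : ∀ z ∈ Metric.ball (0 : ℂ) ε,
        R * A - a * starRingEnd ℂ a - DG z * starRingEnd ℂ (DG z) = 0 := by
      intro z hz
      have hev : (fun w => R * (A * starRingEnd ℂ w) + R * DB w
            - a * starRingEnd ℂ a * starRingEnd ℂ w - DG w * starRingEnd ℂ (g1 w)
            - (a * DG w * w + a * g1 w)) =ᶠ[nhds z] (fun _ => (0 : ℂ)) :=
        Filter.eventuallyEq_of_mem (Metric.isOpen_ball.mem_nhds hz) (fun y hy => hΨ0 y hy)
      have h1 : wdb (fun w => R * (A * starRingEnd ℂ w) + R * DB w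
            - a * starRingEnd ℂ a * starRingEnd ℂ w - DG w * starRingEnd ℂ (g1 w)
            - (a * DG w * w + a * g1 w)) z = 0 := by
        rw [wdb_congr hev]; exact wdb_const 0 z
      have dconj : DifferentiableAt ℝ (fun w : ℂ => starRingEnd ℂ w) z :=
        differentiableAt_conj_comp differentiableAt_fun_id
      have dg1 := hg1d z hz
      have dDG := hDGd z hz
      have dDB := hDBd z hz
      have dcg1 : DifferentiableAt ℝ (fun w => starRingEnd ℂ (g1 w)) z :=
        differentiableAt_conj_comp dg1
      have U1 : DifferentiableAt ℝ (fun w : ℂ => R * (A * starRingEnd ℂ w)) z :=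
        (dconj.const_mul A).const_mul R
      have U2 : DifferentiableAt ℝ (fun w => R * DB w) z := dDB.const_mul R
      have U3 : DifferentiableAt ℝ (fun w : ℂ => a * starRingEnd ℂ a * starRingEnd ℂ w) z :=
        dconj.const_mul _
      have U4 : DifferentiableAt ℝ (fun w => DG w * starRingEnd ℂ (g1 w)) z := dDG.mul dcg1
      have U5 : DifferentiableAt ℝ (fun w => a * DG w * w + a * g1 w) z :=
        ((dDG.const_mul a).mul differentiableAt_fun_id).add (dg1.const_mul a)
      have u1 : wdb (fun w : ℂ => R * (A * starRingEnd ℂ w)) z = R * A := by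
        rw [wdb_const_mul R (dconj.const_mul A), wdb_const_mul A dconj, wdb_conj_id]; ring
      have u2 : wdb (fun w => R * DB w) z = 0 := by
        rw [wdb_const_mul R dDB, hwdb_DB z hz]; ring
      have u3 : wdb (fun w : ℂ => a * starRingEnd ℂ a * starRingEnd ℂ w) z
          = a * starRingEnd ℂ a := by
        rw [wdb_const_mul _ dconj, wdb_conj_id]; ring
      have u4 : wdb (fun w => DG w * starRingEnd ℂ (g1 w)) z
          = DG z * starRingEnd ℂ (DG z) := by
        rw [wdb_mul dDG dcg1, hwdb_DG z hz, wdb_conj dg1, hwd_g1 z hz]; ring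
      have u5 : wdb (fun w => a * DG w * w + a * g1 w) z = 0 := by
        rw [wdb_add (f := fun w => a * DG w * w) (g := fun w => a * g1 w) ((dDG.const_mul a).mul differentiableAt_fun_id) (dg1.const_mul a),
          wdb_mul (dDG.const_mul a) differentiableAt_fun_id, wdb_const_mul a dDG,
          hwdb_DG z hz, wdb_id, wdb_const_mul a dg1, hwdb_g1 z hz]
        ring
      rw [wdb_comb5 U1 U2 U3 U4 U5, u1, u2, u3, u4, u5] at h1
      linear_combination h1
    -- |DG|^2 is constant; deduce that DG has vanishing z-derivative
    have S3 : ∀ z ∈ Metric.ball (0 : ℂ) ε, wd DG z * starRingEnd ℂ (DG z) = 0 := by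
      intro z hz
      have hNconst : Set.EqOn (fun w => DG w * starRingEnd ℂ (DG w))
          (fun _ => R * A - a * starRingEnd ℂ a) (Metric.ball (0 : ℂ) ε) := by
        intro x hx
        show DG x * starRingEnd ℂ (DG x) = R * A - a * starRingEnd ℂ a
        linear_combination -(S2 x hx)
      have hev := Filter.eventuallyEq_of_mem (Metric.isOpen_ball.mem_nhds hz) hNconst
      have h1 : wd (fun w => DG w * starRingEnd ℂ (DG w)) z = 0 := by
        rw [wd_congr hev]; exact wd_const _ z
      have hDGz := hDGd z hz
      have h2 : wd (fun w => DG w * starRingEnd ℂ (DG w)) z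
          = wd DG z * starRingEnd ℂ (DG z) := by
        rw [wd_mul hDGz (differentiableAt_conj_comp hDGz), wd_conj hDGz, hwdb_DG z hz]
        simp
      rw [← h2]; exact h1
    have S4 : ∀ z ∈ Metric.ball (0 : ℂ) ε, wd DG z = 0 := by
      by_cases hc : DG 0 = 0
      · have hall : ∀ z ∈ Metric.ball (0 : ℂ) ε, DG z = 0 := by
          intro z hz
          have h1 := S2 z hz
          have h2 := S2 0 hball0
          rw [hc] at h2
          have h3 : DG z * starRingEnd ℂ (DG z) = 0 := by
            have hcc : starRingEnd ℂ (0 : ℂ) = 0 := by simp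
            rw [hcc] at h2
            linear_combination h2 - h1
          rw [Complex.mul_conj] at h3
          exact Complex.normSq_eq_zero.1 (by exact_mod_cast h3)
        intro z hz
        have hev : DG =ᶠ[nhds z] (fun _ => (0 : ℂ)) :=
          Filter.eventuallyEq_of_mem (Metric.isOpen_ball.mem_nhds hz) (fun y hy => hall y hy)
        rw [wd_congr hev]; exact wd_const 0 z
      · intro z hz
        have h1 := S2 z hz
        have h2 := S2 0 hball0
        have h4 : DG z ≠ 0 := by
          intro h0
          apply hc
          have h3 : DG 0 * starRingEnd ℂ (DG 0) = 0 := by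
            rw [h0] at h1
            have hcc : starRingEnd ℂ (0 : ℂ) = 0 := by simp
            rw [hcc] at h1
            linear_combination h1 - h2
          rw [Complex.mul_conj] at h3
          exact Complex.normSq_eq_zero.1 (by exact_mod_cast h3)
        have h5 : starRingEnd ℂ (DG z) ≠ 0 := by
          intro h0
          apply h4
          have := congrArg (starRingEnd ℂ) h0
          simpa using this
        rcases mul_eq_zero.1 (S3 z hz) with h | h
        · exact h
        · exact absurd h h5
    refine ⟨?_, ?_⟩
    · intro z hz
      have := S4 z hz
      rwa [hwd_DG z hz] at this
    -- ============ polynomial structure of w2b f in the first variable ============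
    · have hφd : ∀ z ∈ Metric.ball (0 : ℂ) ε,
          DifferentiableAt ℝ (fun w => w2b f (w, z2)) z :=
        fun z hz => slice1_diffAt hU cd_w2bf (pmem z hz)
      have hφholo : ∀ z ∈ Metric.ball (0 : ℂ) ε,
          DifferentiableAt ℂ (fun w => w2b f (w, z2)) z := by
        intro z hz
        refine holo_of_wdb (hφd z hz) ?_
        rw [wdb_slice hU cd_w2bf (pmem z hz)]
        exact Zphi _ (pmem z hz)
      have hg1holo : ∀ z ∈ Metric.ball (0 : ℂ) ε, DifferentiableAt ℂ g1 z :=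
        fun z hz => holo_of_wdb (hg1d z hz) (hwdb_g1 z hz)
      have hDGholo : ∀ z ∈ Metric.ball (0 : ℂ) ε, DifferentiableAt ℂ DG z :=
        fun z hz => holo_of_wdb (hDGd z hz) (hwdb_DG z hz)
      have hderivφ : ∀ z ∈ Metric.ball (0 : ℂ) ε,
          deriv (fun w => w2b f (w, z2)) z = g1 z := by
        intro z hz
        have h1 : wd (fun w => w2b f (w, z2)) z = deriv (fun w => w2b f (w, z2)) z :=
          wd_of_holo (hφholo z hz)
        rw [← h1, wd_slice hU cd_w2bf (pmem z hz), hg1def]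
        show w1 (w2b f) (z, z2) = w2b (w1 f) (z, z2)
        exact wop_comm hU hf (pmem z hz)
      have hderivg1 : ∀ z ∈ Metric.ball (0 : ℂ) ε, deriv g1 z = DG z := by
        intro z hz
        have h1 : wd g1 z = deriv g1 z := wd_of_holo (hg1holo z hz)
        rw [← h1]; exact hwd_g1 z hz
      have hderivDG : ∀ z ∈ Metric.ball (0 : ℂ) ε, deriv DG z = 0 := by
        intro z hz
        have h1 : wd DG z = deriv DG z := wd_of_holo (hDGholo z hz)
        rw [← h1]; exact S4 z hz
      have hDGconst : ∀ z ∈ Metric.ball (0 : ℂ) ε, DG z = DG 0 :=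
        const_of_deriv_zero hε DG hDGholo hderivDG
      -- g1 is affine
      have hgc := const_of_deriv_zero hε (fun w => g1 w - DG 0 * w)
        (fun z hz => (hg1holo z hz).sub (differentiableAt_id.const_mul (DG 0)))
        (fun z hz => by
          have Hg1 : HasDerivAt g1 (DG z) z := by
            have h := (hg1holo z hz).hasDerivAt
            rwa [hderivg1 z hz] at h
          have Hlin : HasDerivAt (fun w : ℂ => DG 0 * w) (DG 0 * 1) z :=
            HasDerivAt.const_mul (DG 0) (hasDerivAt_id z)
          have hzero : DG z - DG 0 * 1 = 0 := by rw [hDGconst z hz]; ring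
          exact (Hg1.sub Hlin).deriv.trans hzero)
      have hg1aff : ∀ z ∈ Metric.ball (0 : ℂ) ε, g1 z = DG 0 * z + g1 0 := by
        intro z hz
        have h2 : g1 z - DG 0 * z = g1 0 - DG 0 * 0 := hgc z hz
        linear_combination h2
      -- φ is quadratic
      have hquadc := const_of_deriv_zero hε
        (fun w => w2b f (w, z2) - ((1/2 : ℂ) * DG 0 * w ^ 2 + g1 0 * w))
        (fun z hz => (hφholo z hz).sub
          (((differentiableAt_pow 2).const_mul _).add (differentiableAt_id.const_mul (g1 0))))
        (fun z hz => by
          have Hφ : HasDerivAt (fun w => w2b f (w, z2)) (g1 z) z := by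
            have h := (hφholo z hz).hasDerivAt
            rwa [hderivφ z hz] at h
          have Hq := (HasDerivAt.const_mul ((1/2 : ℂ) * DG 0) (hasDerivAt_pow 2 z)).add
            (HasDerivAt.const_mul (g1 0) (hasDerivAt_id z))
          have hzero : g1 z - ((1/2 : ℂ) * DG 0 * (((2 : ℕ) : ℂ) * z ^ (2 - 1)) + g1 0 * 1)
              = 0 := by
            rw [hg1aff z hz]
            push_cast
            ring
          exact (Hφ.sub Hq).deriv.trans hzero)
      intro z hz
      have h2 : w2b f (z, z2) - ((1/2 : ℂ) * DG 0 * z ^ 2 + g1 0 * z)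
          = w2b f ((0 : ℂ), z2) - ((1/2 : ℂ) * DG 0 * (0 : ℂ) ^ 2 + g1 0 * 0) := hquadc z hz
      have hc1 : DG 0 = w1 (w1 (w2b f)) ((0 : ℂ), z2) := by
        rw [hDGdef]
        show w1 (w2b (w1 f)) ((0 : ℂ), z2) = w1 (w1 (w2b f)) ((0 : ℂ), z2)
        refine wop_congrU hU (fun q hq => ?_) (pmem 0 hball0)
        exact wop_comm hU hf hq
      have hb1 : g1 0 = w1 (w2b f) ((0 : ℂ), z2) := by
        rw [hg1def]
        show w2b (w1 f) ((0 : ℂ), z2) = w1 (w2b f) ((0 : ℂ), z2)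
        exact wop_comm hU hf (pmem 0 hball0)
      rw [← hc1, ← hb1]
      linear_combination h2
  -- ===================== assembling the two conclusions =====================
  constructor
  · intro z1 h1 z2 h2
    have hp : (z1, z2) ∈ Metric.ball (0 : ℂ) ε ×ˢ Metric.ball (0 : ℂ) ε :=
      Set.mk_mem_prod h1 h2
    have cd2 : ContDiffOn ℝ (⊤ : ℕ∞) (w1 (w1 f)) (Metric.ball (0 : ℂ) ε ×ˢ Metric.ball (0 : ℂ) ε) :=
      wop_contDiffOn hU cd_w1f
    have cd3 : ContDiffOn ℝ (⊤ : ℕ∞) (w1 (w1 (w1 f)))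
        (Metric.ball (0 : ℂ) ε ×ˢ Metric.ball (0 : ℂ) ε) := wop_contDiffOn hU cd2
    have T2 : ∀ q ∈ Metric.ball (0 : ℂ) ε ×ˢ Metric.ball (0 : ℂ) ε,
        wd1 (wd1 s) q.1 q.2 = w1 (w1 f) q := fun q hq => wd1_sliceT hU cd_w1f T1q hq
    have T3 : ∀ q ∈ Metric.ball (0 : ℂ) ε ×ˢ Metric.ball (0 : ℂ) ε,
        wd1 (wd1 (wd1 s)) q.1 q.2 = w1 (w1 (w1 f)) q := fun q hq => wd1_sliceT hU cd2 T2 hq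
    have T4 : wd2b (wd1 (wd1 (wd1 s))) z1 z2 = w2b (w1 (w1 (w1 f))) (z1, z2) :=
      wd2b_sliceT hU cd3 T3 hp
    rw [T4]
    have C1 : w2b (w1 (w1 (w1 f))) (z1, z2) = w1 (w2b (w1 (w1 f))) (z1, z2) :=
      wop_comm hU cd2 hp
    have C2 : w1 (w2b (w1 (w1 f))) (z1, z2) = w1 (w1 (w2b (w1 f))) (z1, z2) := by
      refine wop_congrU hU (fun q hq => ?_) hp
      exact wop_comm hU cd_w1f hq
    rw [C1, C2]
    exact (MAIN z2 h2).1 z1 h1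
  · refine ⟨fun z2 => (1/2 : ℂ) * w1 (w1 (w2b f)) ((0 : ℂ), z2),
      fun z2 => w1 (w2b f) ((0 : ℂ), z2), fun z2 => w2b f ((0 : ℂ), z2), ?_, ?_, ?_, ?_⟩
    · have base : ContDiffOn ℝ (⊤ : ℕ∞) (w1 (w1 (w2b f)))
          (Metric.ball (0 : ℂ) ε ×ˢ Metric.ball (0 : ℂ) ε) :=
        wop_contDiffOn hU (wop_contDiffOn hU cd_w2bf)
      have hmap : Set.MapsTo (fun z2 : ℂ => ((0 : ℂ), z2)) (Metric.ball (0 : ℂ) ε)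
          (Metric.ball (0 : ℂ) ε ×ˢ Metric.ball (0 : ℂ) ε) :=
        fun z2 hz2 => Set.mk_mem_prod hball0 hz2
      exact contDiffOn_const.mul
        (base.comp ((contDiff_const.prodMk contDiff_id).contDiffOn) hmap)
    · have base : ContDiffOn ℝ (⊤ : ℕ∞) (w1 (w2b f))
          (Metric.ball (0 : ℂ) ε ×ˢ Metric.ball (0 : ℂ) ε) := wop_contDiffOn hU cd_w2bf
      have hmap : Set.MapsTo (fun z2 : ℂ => ((0 : ℂ), z2)) (Metric.ball (0 : ℂ) ε)
          (Metric.ball (0 : ℂ) ε ×ˢ Metric.ball (0 : ℂ) ε) :=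
        fun z2 hz2 => Set.mk_mem_prod hball0 hz2
      exact base.comp ((contDiff_const.prodMk contDiff_id).contDiffOn) hmap
    · have hmap : Set.MapsTo (fun z2 : ℂ => ((0 : ℂ), z2)) (Metric.ball (0 : ℂ) ε)
          (Metric.ball (0 : ℂ) ε ×ˢ Metric.ball (0 : ℂ) ε) :=
        fun z2 hz2 => Set.mk_mem_prod hball0 hz2
      exact cd_w2bf.comp ((contDiff_const.prodMk contDiff_id).contDiffOn) hmap
    · intro z1 h1 z2 h2
      have hp : (z1, z2) ∈ Metric.ball (0 : ℂ) ε ×ˢ Metric.ball (0 : ℂ) ε :=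
        Set.mk_mem_prod h1 h2
      have T : wd2b s z1 z2 = w2b f (z1, z2) := wd2b_sliceT hU hf hfr hp
      rw [T]
      have h3 := (MAIN z2 h2).2 z1 h1
      rw [h3]
end
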